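/- arXiv:2104.13124 — 2 statements merged into one kernel-verified Lean document; each statement's English description precedes it below -/
import Mathlib

section
/- If a nonempty sequent ⊢ Γ is provable in the sequent calculus MLL1, then the formula ⋁Γ is provable in the deep inference system MLS1X. -/
set_option linter.unusedVariables false

/-! ## First-order terms and formulas in negation normal form -/

/-- First-order terms: variables and function symbols are named by natural numbers.
(A function symbol together with the number of arguments it is applied to plays the
role of a symbol of fixed finite arity; there are countably many symbols of each arity.) -/
inductive Term : Type where
  | var : ℕ → Term
  | fn  : ℕ → List Term → Term

/-- The variable `x` occurs in the term. -/
inductive Term.HasVar : Term → ℕ → Prop where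
  | var (x : ℕ) : HasVar (.var x) x
  | fn {f : ℕ} {ts : List Term} {t : Term} {x : ℕ} :
      t ∈ ts → HasVar t x → HasVar (.fn f ts) x

/-- Simultaneous substitution on terms. -/
def Term.subst (σ : ℕ → Term) : Term → Term
  | .var x => σ x
  | .fn f ts => .fn f (ts.attach.map fun t => t.1.subst σ)
decreasing_by
  have := List.sizeOf_lt_of_mem t.2
  simp at *; omega

/-- Renaming of variables in a term. -/
def Term.rename (ρ : ℕ → ℕ) (t : Term) : Term := t.subst (fun x => .var (ρ x))

/-- Formulas in negation normal form: `pos p ts` is the atom `p(ts)` and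
`neg p ts` is the atom `p̄(ts)` built from the dual predicate symbol. -/
inductive Form : Type where
  | pos : ℕ → List Term → Form
  | neg : ℕ → List Term → Form
  | top : Form
  | bot : Form
  | and : Form → Form → Form
  | or  : Form → Form → Form
  | all : ℕ → Form → Form
  | ex  : ℕ → Form → Form

namespace Form

/-- Atoms: `⊤`, `⊥`, `p(ts)`, `p̄(ts)`. -/
def IsAtom : Form → Prop
  | pos _ _ => True
  | neg _ _ => True
  | top => True
  | bot => True
  | _ => False

/-- Negation, defined via De Morgan duality. -/
def negf : Form → Form
  | pos p ts => neg p ts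
  | neg p ts => pos p ts
  | top => bot
  | bot => top
  | and A B => or A.negf B.negf
  | or A B => and A.negf B.negf
  | all x A => ex x A.negf
  | ex x A => all x A.negf

/-- The variable `x` occurs free in the formula. -/
inductive FreeVar : Form → ℕ → Prop where
  | pos {p ts t x} : t ∈ ts → Term.HasVar t x → FreeVar (pos p ts) x
  | neg {p ts t x} : t ∈ ts → Term.HasVar t x → FreeVar (neg p ts) x
  | andl {A B x} : FreeVar A x → FreeVar (and A B) x
  | andr {A B x} : FreeVar B x → FreeVar (and A B) x
  | orl {A B x} : FreeVar A x → FreeVar (or A B) x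
  | orr {A B x} : FreeVar B x → FreeVar (or A B) x
  | all {A x y} : FreeVar A x → x ≠ y → FreeVar (all y A) x
  | ex {A x y} : FreeVar A x → x ≠ y → FreeVar (ex y A) x

/-- Substitution of the term `u` for all free occurrences of the variable `x`. -/
def subst1 (x : ℕ) (u : Term) : Form → Form
  | pos p ts => pos p (ts.map (Term.subst (fun y => if y = x then u else .var y)))
  | neg p ts => neg p (ts.map (Term.subst (fun y => if y = x then u else .var y)))
  | top => top
  | bot => bot
  | and A B => and (A.subst1 x u) (B.subst1 x u)
  | or A B => or (A.subst1 x u) (B.subst1 x u)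
  | all y A => if y = x then all y A else all y (A.subst1 x u)
  | ex y A => if y = x then ex y A else ex y (A.subst1 x u)

/-- Application of a variable renaming to a formula, renaming all occurrences
of variables (both free and bound). -/
def renameAll (ρ : ℕ → ℕ) : Form → Form
  | pos p ts => pos p (ts.map (Term.rename ρ))
  | neg p ts => neg p (ts.map (Term.rename ρ))
  | top => top
  | bot => bot
  | and A B => and (A.renameAll ρ) (B.renameAll ρ)
  | or A B => or (A.renameAll ρ) (B.renameAll ρ)
  | all y A => all (ρ y) (A.renameAll ρ)
  | ex y A => ex (ρ y) (A.renameAll ρ)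

/-- The formula contains no occurrence of `⊥`. -/
def BotFree : Form → Prop
  | bot => False
  | and A B => BotFree A ∧ BotFree B
  | or A B => BotFree A ∧ BotFree B
  | all _ A => BotFree A
  | ex _ A => BotFree A
  | _ => True

/-- Formula equivalence `≡`: the smallest congruence generated by commutativity and
associativity of `∧` and `∨`, commutation of like quantifiers, and the scope equations
`∀x.(A∨B) ≡ (∀x.A)∨B` and `∃x.(A∧B) ≡ (∃x.A)∧B` when `x` is not free in `B`. -/
inductive Equiv : Form → Form → Prop where
  | refl (A) : Equiv A A
  | symm {A B} : Equiv A B → Equiv B A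
  | trans {A B C} : Equiv A B → Equiv B C → Equiv A C
  | andCongr {A A' B B'} : Equiv A A' → Equiv B B' → Equiv (and A B) (and A' B')
  | orCongr {A A' B B'} : Equiv A A' → Equiv B B' → Equiv (or A B) (or A' B')
  | allCongr {A A'} (x) : Equiv A A' → Equiv (all x A) (all x A')
  | exCongr {A A'} (x) : Equiv A A' → Equiv (ex x A) (ex x A')
  | andComm (A B) : Equiv (and A B) (and B A)
  | orComm (A B) : Equiv (or A B) (or B A)
  | andAssoc (A B C) : Equiv (and (and A B) C) (and A (and B C))
  | orAssoc (A B C) : Equiv (or (or A B) C) (or A (or B C))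
  | allSwap (x y A) : Equiv (all x (all y A)) (all y (all x A))
  | exSwap (x y A) : Equiv (ex x (ex y A)) (ex y (ex x A))
  | allOr (x A B) (h : ¬ FreeVar B x) : Equiv (all x (or A B)) (or (all x A) B)
  | exAnd (x A B) (h : ¬ FreeVar B x) : Equiv (ex x (and A B)) (and (ex x A) B)

/-- The list of binding occurrences of variables in a formula. -/
def bvList : Form → List ℕ
  | and A B => A.bvList ++ B.bvList
  | or A B => A.bvList ++ B.bvList
  | all x A => x :: A.bvList
  | ex x A => x :: A.bvList
  | _ => []

/-- A formula is rectified if all bound variables are distinct from one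
another and from all free variables. -/
def Rectified (A : Form) : Prop :=
  A.bvList.Nodup ∧ ∀ x ∈ A.bvList, ¬ A.FreeVar x

/-- The variable `x` occurs (free or bound) in the formula. -/
def VarOccurs (A : Form) (x : ℕ) : Prop := A.FreeVar x ∨ x ∈ A.bvList

/-- The disjunction `⋁Γ` of the formulas of a sequent (written as a list);
by convention the empty disjunction is `⊥`. -/
def bigOr : List Form → Form
  | [] => bot
  | [A] => A
  | A :: B :: Γ => or A (bigOr (B :: Γ))

end Form

/-- α-conversion: renaming of bound variables. -/
inductive Alpha : Form → Form → Prop where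
  | refl (A) : Alpha A A
  | symm {A B} : Alpha A B → Alpha B A
  | trans {A B C} : Alpha A B → Alpha B C → Alpha A C
  | andCongr {A A' B B'} : Alpha A A' → Alpha B B' → Alpha (.and A B) (.and A' B')
  | orCongr {A A' B B'} : Alpha A A' → Alpha B B' → Alpha (.or A B) (.or A' B')
  | allCongr {A A'} (x) : Alpha A A' → Alpha (.all x A) (.all x A')
  | exCongr {A A'} (x) : Alpha A A' → Alpha (.ex x A) (.ex x A')
  | allRen (x y A) (h : ¬ A.VarOccurs y) :
      Alpha (.all x A) (.all y (A.subst1 x (.var y)))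
  | exRen (x y A) (h : ¬ A.VarOccurs y) :
      Alpha (.ex x A) (.ex y (A.subst1 x (.var y)))

/-- `B` is a rectification of `A`: a rectified form of `A` obtained by renaming
bound variables. -/
def IsRectification (B A : Form) : Prop := Alpha A B ∧ B.Rectified

/-! ## Deep inference -/

/-- A (positive) context: a formula with exactly one hole in atom position. -/
inductive Ctx : Type where
  | hole : Ctx
  | andL : Ctx → Form → Ctx
  | andR : Form → Ctx → Ctx
  | orL  : Ctx → Form → Ctx
  | orR  : Form → Ctx → Ctx
  | all  : ℕ → Ctx → Ctx
  | ex   : ℕ → Ctx → Ctx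

/-- `S.fill A` replaces the hole of `S` by `A`. -/
def Ctx.fill : Ctx → Form → Form
  | .hole, A => A
  | .andL S B, A => .and (S.fill A) B
  | .andR B S, A => .and B (S.fill A)
  | .orL S B, A => .or (S.fill A) B
  | .orR B S, A => .or B (S.fill A)
  | .all x S, A => .all x (S.fill A)
  | .ex x S, A => .ex x (S.fill A)

/-- The names of the deep inference rules. -/
inductive RuleName : Type where
  | allTop   -- ∀⊤
  | aiDown   -- ai↓
  | tDown    -- t↓
  | s        -- switch
  | mix      -- mix
  | exR      -- ∃
  | equivR   -- ≡
  | wDown    -- w↓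
  | m        -- medial
  | acDown   -- ac↓
  | mAll     -- m∀
  | mEx      -- m∃
  | wAll     -- w∀
  | cAll     -- c∀
  | cDown    -- general contraction c↓
  deriving DecidableEq

/-- Shallow instances of the deep inference rules: `Shallow r P Q` means that the
rule `r` rewrites the premise `P` into the conclusion `Q` (with the empty context). -/
inductive Shallow : RuleName → Form → Form → Prop where
  | allTop (x : ℕ) : Shallow .allTop .top (.all x .top)
  | aiDown (a : Form) (h : a.IsAtom) : Shallow .aiDown .top (.or a a.negf)
  | tDown (A : Form) : Shallow .tDown A (.and A .top)
  | s (A B C : Form) : Shallow .s (.and A (.or B C)) (.or (.and A B) C)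
  | mix (A B : Form) : Shallow .mix (.and A B) (.or A B)
  | exR (x : ℕ) (t : Term) (A : Form) : Shallow .exR (A.subst1 x t) (.ex x A)
  | equivR {A B : Form} (h : Form.Equiv A B) : Shallow .equivR B A
  | wDown (A B : Form) : Shallow .wDown A (.or A B)
  | m (A B C D : Form) :
      Shallow .m (.or (.and A C) (.and B D)) (.and (.or A B) (.or C D))
  | acDown (a : Form) (h : a.IsAtom) : Shallow .acDown (.or a a) a
  | mAll (x : ℕ) (A B : Form) :
      Shallow .mAll (.or (.all x A) (.all x B)) (.all x (.or A B))
  | mEx (x : ℕ) (A B : Form) :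
      Shallow .mEx (.or (.ex x A) (.ex x B)) (.ex x (.or A B))
  | wAll (x : ℕ) (A : Form) (h : ¬ A.FreeVar x) : Shallow .wAll A (.all x A)
  | cAll (x : ℕ) (A : Form) : Shallow .cAll (.all x (.all x A)) (.all x A)
  | cDown (A : Form) : Shallow .cDown (.or A A) A

/-- One deep inference step using a rule from `R`, applied inside a context. -/
def Step (R : Set RuleName) (A B : Form) : Prop :=
  ∃ r ∈ R, ∃ (S : Ctx) (P Q : Form), Shallow r P Q ∧ A = S.fill P ∧ B = S.fill Q

/-- `Deriv R A B`: there is a derivation from `A` to `B` using only rules from `R`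
(a finite sequence of deep inference steps rewriting `A` into `B`). -/
def Deriv (R : Set RuleName) : Form → Form → Prop :=
  Relation.ReflTransGen (Step R)

/-- A formula is provable in a system if there is a derivation from `⊤` to it. -/
def Provable (R : Set RuleName) (A : Form) : Prop := Deriv R .top A

/-- The linear system `MLS1X`. -/
def MLS1X : Set RuleName :=
  {RuleName.allTop, RuleName.aiDown, RuleName.tDown, RuleName.s, RuleName.mix,
   RuleName.exR, RuleName.equivR}

/-- The system `KS1`. -/
def KS1 : Set RuleName :=
  {RuleName.allTop, RuleName.aiDown, RuleName.tDown, RuleName.s, RuleName.mix,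
   RuleName.exR, RuleName.equivR, RuleName.wDown, RuleName.m, RuleName.acDown,
   RuleName.mAll, RuleName.mEx, RuleName.wAll, RuleName.cAll}

/-! ## The sequent calculi LK1 and MLL1 -/

/-- One-sided sequent calculus on multisets of formulas. `SC true` is full `LK1`;
`SC false` is its linear fragment `MLL1` (no contraction and no weakening). -/
inductive SC : Bool → Multiset Form → Prop where
  | ax (full : Bool) (a : Form) (h : a.IsAtom) : SC full {a, a.negf}
  | top (full : Bool) : SC full {Form.top}
  | bot (full : Bool) {Γ : Multiset Form} : SC full Γ → SC full (Form.bot ::ₘ Γ)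
  | orR (full : Bool) {Γ : Multiset Form} {A B : Form} :
      SC full (A ::ₘ B ::ₘ Γ) → SC full (Form.or A B ::ₘ Γ)
  | andR (full : Bool) {Γ Δ : Multiset Form} {A B : Form} :
      SC full (A ::ₘ Γ) → SC full (B ::ₘ Δ) → SC full (Form.and A B ::ₘ (Γ + Δ))
  | mix (full : Bool) {Γ Δ : Multiset Form} : SC full Γ → SC full Δ → SC full (Γ + Δ)
  | exR (full : Bool) {Γ : Multiset Form} {A : Form} (x : ℕ) (t : Term) :
      SC full (A.subst1 x t ::ₘ Γ) → SC full (Form.ex x A ::ₘ Γ)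
  | allR (full : Bool) {Γ : Multiset Form} {A : Form} (x : ℕ)
      (h : ∀ B ∈ Γ, ¬ B.FreeVar x) :
      SC full (A ::ₘ Γ) → SC full (Form.all x A ::ₘ Γ)
  | ctr {Γ : Multiset Form} {A : Form} : SC true (A ::ₘ A ::ₘ Γ) → SC true (A ::ₘ Γ)
  | wk {Γ : Multiset Form} (A : Form) : SC true Γ → SC true (A ::ₘ Γ)

/-- Provability in the sequent calculus `LK1`. -/
def LK1 (Γ : Multiset Form) : Prop := SC true Γ

/-- Provability in the sequent calculus `MLL1` (first-order multiplicative
linear logic with mix). -/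
def MLL1 (Γ : Multiset Form) : Prop := SC false Γ

/-!
Induction on the `MLL1` proof, translating every rule into a short `MLS1X` derivation on the
disjunction of its sequent. The axioms are instances of `ai↓`; a branching rule first joins
the translations of its premises into their conjunction (grown from `⊤ ∧ ⊤`, obtained by
`t↓`), and then `s` (for `∧`) or `mix` moves the side formulas out of the conjunction. The
eigenvariable condition of `∀` is exactly the side condition of the scope equation
`∀x.(A∨B) ≡ (∀x.A)∨B`, and the order of the disjuncts is irrelevant since reordering is a
single `≡` step.
-/

open Relation

namespace Ctx

def comp : Ctx → Ctx → Ctx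
  | hole, T => T
  | andL S B, T => andL (S.comp T) B
  | andR B S, T => andR B (S.comp T)
  | orL S B, T => orL (S.comp T) B
  | orR B S, T => orR B (S.comp T)
  | all x S, T => all x (S.comp T)
  | ex x S, T => ex x (S.comp T)

theorem fill_comp (S T : Ctx) (A : Form) : (S.comp T).fill A = S.fill (T.fill A) := by
  induction S <;> simp [comp, fill, *]

end Ctx

section Derivations

variable {R : Set RuleName} {A B C : Form}

theorem Step.fill (S : Ctx) : Step R A B → Step R (S.fill A) (S.fill B)
  | ⟨r, hr, T, P, Q, hs, hA, hB⟩ =>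
    ⟨r, hr, S.comp T, P, Q, hs, by rw [hA, Ctx.fill_comp], by rw [hB, Ctx.fill_comp]⟩

theorem Deriv.fill (S : Ctx) (h : Deriv R A B) : Deriv R (S.fill A) (S.fill B) :=
  ReflTransGen.lift S.fill (fun _ _ => Step.fill S) _ _ h

theorem Deriv.trans (h₁ : Deriv R A B) (h₂ : Deriv R B C) : Deriv R A C :=
  ReflTransGen.trans h₁ h₂

theorem Shallow.deriv {r : RuleName} (hr : r ∈ R) (h : Shallow r A B) : Deriv R A B :=
  ReflTransGen.single ⟨r, hr, .hole, A, B, h, rfl, rfl⟩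

theorem Provable.trans (h : Provable R A) (d : Deriv R A B) : Provable R B :=
  Deriv.trans h d

end Derivations

section MLS1X

variable {A B : Form}

theorem Form.Equiv.deriv (h : Form.Equiv A B) : Deriv MLS1X A B :=
  (Shallow.equivR h.symm).deriv (by simp [MLS1X])

theorem Provable.and (hA : Provable MLS1X A) (hB : Provable MLS1X B) :
    Provable MLS1X (.and A B) :=
  ((Shallow.tDown .top).deriv (by simp [MLS1X])).trans
    ((hA.fill (.andL .hole .top)).trans (hB.fill (.andR A .hole)))

theorem Provable.all (x : ℕ) (h : Provable MLS1X A) : Provable MLS1X (.all x A) :=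
  ((Shallow.allTop x).deriv (by simp [MLS1X])).trans (h.fill (.all x .hole))

theorem Provable.bot_or (h : Provable MLS1X A) : Provable MLS1X (.or .bot A) :=
  ((Shallow.aiDown .bot trivial).deriv (by simp [MLS1X])).trans (h.fill (.orR .bot .hole))

end MLS1X

namespace Form

variable {A B : Form} {L L₁ L₂ : List Form}

theorem bigOr_cons_of_ne_nil (A : Form) (hL : L ≠ []) : bigOr (A :: L) = or A (bigOr L) := by
  cases L with
  | nil => contradiction
  | cons _ _ => rfl

theorem not_freeVar_bigOr {x : ℕ} (h : ∀ B ∈ L, ¬ B.FreeVar x) : ¬ (bigOr L).FreeVar x := by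
  induction L with
  | nil => nofun
  | cons A L ih =>
    rcases eq_or_ne L [] with rfl | hL
    · exact h A (by simp)
    rw [bigOr_cons_of_ne_nil A hL]
    intro hf
    cases hf with
    | orl hA => exact h A (by simp) hA
    | orr hL => exact ih (fun B hB => h B (by simp [hB])) hL

theorem Equiv.bigOr_perm (p : L₁.Perm L₂) : Equiv (bigOr L₁) (bigOr L₂) := by
  induction p with
  | nil => exact .refl _
  | @cons A l₁ l₂ p ih =>
    rcases eq_or_ne l₁ [] with rfl | h₁
    · rw [List.nil_perm.mp p]
      exact .refl _
    have h₂ : l₂ ≠ [] := fun h => h₁ (List.perm_nil.mp (h ▸ p))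
    rw [bigOr_cons_of_ne_nil A h₁, bigOr_cons_of_ne_nil A h₂]
    exact .orCongr (.refl A) ih
  | swap A B l =>
    rcases eq_or_ne l [] with rfl | hl
    · exact .orComm B A
    simp only [bigOr_cons_of_ne_nil _ hl, bigOr_cons_of_ne_nil _ (List.cons_ne_nil _ _)]
    exact (Equiv.orAssoc B A _).symm.trans ((Equiv.orComm B A).orCongr (.refl _)
      |>.trans (Equiv.orAssoc A B _))
  | trans _ _ ih₁ ih₂ => exact ih₁.trans ih₂

theorem Equiv.bigOr_append (h₁ : L₁ ≠ []) :
    Equiv (bigOr (L₁ ++ L₂)) (bigOr (bigOr L₁ :: L₂)) := by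
  induction L₁ with
  | nil => contradiction
  | cons A L ih =>
    rcases eq_or_ne L [] with rfl | hL
    · exact .refl _
    rw [List.cons_append, bigOr_cons_of_ne_nil A (by simp [hL]), bigOr_cons_of_ne_nil A hL]
    rcases eq_or_ne L₂ [] with rfl | hL₂
    · simpa using .refl _
    have ih' := ih hL
    rw [bigOr_cons_of_ne_nil _ hL₂] at ih' ⊢
    exact (Equiv.orCongr (.refl A) ih').trans (Equiv.orAssoc _ _ _).symm

theorem Equiv.all_bigOr_cons {x : ℕ} (h : ∀ B ∈ L, ¬ B.FreeVar x) :
    Equiv (all x (bigOr (A :: L))) (bigOr (all x A :: L)) := by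
  rcases eq_or_ne L [] with rfl | hL
  · exact .refl _
  rw [bigOr_cons_of_ne_nil _ hL, bigOr_cons_of_ne_nil _ hL]
  exact .allOr x A _ (not_freeVar_bigOr h)

theorem Deriv.bigOr_cons {R : Set RuleName} (h : Deriv R A B) :
    Deriv R (bigOr (A :: L)) (bigOr (B :: L)) := by
  rcases eq_or_ne L [] with rfl | hL
  · exact h
  rw [bigOr_cons_of_ne_nil _ hL, bigOr_cons_of_ne_nil _ hL]
  exact h.fill (.orL .hole _)

theorem deriv_and_bigOr_right :
    Deriv MLS1X (and A (bigOr (B :: L))) (bigOr (and A B :: L)) := by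
  rcases eq_or_ne L [] with rfl | hL
  · exact ReflTransGen.refl
  rw [bigOr_cons_of_ne_nil _ hL, bigOr_cons_of_ne_nil _ hL]
  exact (Shallow.s A B _).deriv (by simp [MLS1X])

theorem deriv_and_bigOr_left :
    Deriv MLS1X (and (bigOr (A :: L)) B) (bigOr (and A B :: L)) :=
  (Equiv.andComm _ _).deriv.trans <| deriv_and_bigOr_right.trans
    (Deriv.bigOr_cons (Equiv.andComm B A).deriv)

theorem deriv_and_bigOr_bigOr {Γ Δ : List Form} :
    Deriv MLS1X (and (bigOr (A :: Γ)) (bigOr (B :: Δ))) (bigOr (and A B :: (Γ ++ Δ))) :=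
  deriv_and_bigOr_right.trans <| (Deriv.bigOr_cons deriv_and_bigOr_left).trans
    (Equiv.bigOr_append (L₁ := and A B :: Γ) (by simp)).symm.deriv

theorem deriv_mix_bigOr (h₁ : L₁ ≠ []) (h₂ : L₂ ≠ []) :
    Deriv MLS1X (and (bigOr L₁) (bigOr L₂)) (bigOr (L₁ ++ L₂)) := by
  have split := (Equiv.bigOr_append (L₂ := L₂) h₁).symm
  rw [bigOr_cons_of_ne_nil _ h₂] at split
  exact ((Shallow.mix _ _).deriv (by simp [MLS1X])).trans split.deriv

theorem provable_bigOr_of_coe_eq (hL : (L₁ : Multiset Form) = L₂)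
    (h : Provable MLS1X (bigOr L₁)) : Provable MLS1X (bigOr L₂) :=
  h.trans (Equiv.bigOr_perm (Multiset.coe_eq_coe.mp hL)).deriv

end Form

open Form

theorem SC.ne_zero {b : Bool} {Γ : Multiset Form} (h : SC b Γ) : Γ ≠ 0 := by
  induction h <;> simp_all [Multiset.insert_eq_cons]

theorem MLL1.provable_bigOr {Γ : Multiset Form} (h : MLL1 Γ) {L : List Form}
    (hL : (L : Multiset Form) = Γ) : Provable MLS1X (bigOr L) := by
  unfold MLL1 at h
  generalize hb : false = b at h
  induction h generalizing L with
  | ax _ a ha =>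
    refine provable_bigOr_of_coe_eq (L₁ := [a, a.negf]) (by rw [hL]; rfl) ?_
    exact (Shallow.aiDown a ha).deriv (by simp [MLS1X])
  | top => exact provable_bigOr_of_coe_eq (L₁ := [top]) (by simp [hL]) ReflTransGen.refl
  | @bot _ Γ h ih =>
    refine provable_bigOr_of_coe_eq (L₁ := bot :: Γ.toList)
      (by simp [hL, ← Multiset.cons_coe]) ?_
    rw [bigOr_cons_of_ne_nil _ (by simpa using h.ne_zero)]
    exact (ih (by simp) hb).bot_or
  | @orR _ Γ A B _ ih =>
    refine provable_bigOr_of_coe_eq (L₁ := or A B :: Γ.toList)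
      (by simp [hL, ← Multiset.cons_coe]) ?_
    exact (ih (L := [A, B] ++ Γ.toList) (by simp [← Multiset.cons_coe]) hb).trans
      (Equiv.bigOr_append (by simp)).deriv
  | @andR _ Γ Δ A B _ _ ih₁ ih₂ =>
    refine provable_bigOr_of_coe_eq (L₁ := and A B :: (Γ.toList ++ Δ.toList))
      (by simp [hL, ← Multiset.cons_coe, ← Multiset.coe_add]) ?_
    have hA := ih₁ (L := A :: Γ.toList) (by simp [← Multiset.cons_coe]) hb
    have hB := ih₂ (L := B :: Δ.toList) (by simp [← Multiset.cons_coe]) hb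
    exact (hA.and hB).trans deriv_and_bigOr_bigOr
  | @mix _ Γ Δ hΓ hΔ ih₁ ih₂ =>
    refine provable_bigOr_of_coe_eq (L₁ := Γ.toList ++ Δ.toList)
      (by simp [hL, ← Multiset.coe_add]) ?_
    exact ((ih₁ Γ.coe_toList hb).and (ih₂ Δ.coe_toList hb)).trans
      (deriv_mix_bigOr (by simpa using hΓ.ne_zero) (by simpa using hΔ.ne_zero))
  | @exR _ Γ A x t _ ih =>
    refine provable_bigOr_of_coe_eq (L₁ := ex x A :: Γ.toList)
      (by simp [hL, ← Multiset.cons_coe]) ?_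
    exact (ih (L := A.subst1 x t :: Γ.toList) (by simp [← Multiset.cons_coe]) hb).trans
      (Deriv.bigOr_cons ((Shallow.exR x t A).deriv (by simp [MLS1X])))
  | @allR _ Γ A x hx _ ih =>
    refine provable_bigOr_of_coe_eq (L₁ := all x A :: Γ.toList)
      (by simp [hL, ← Multiset.cons_coe]) ?_
    exact ((ih (L := A :: Γ.toList) (by simp [← Multiset.cons_coe]) hb).all x).trans
      (Equiv.all_bigOr_cons (by simpa using hx)).deriv
  | ctr => cases hb
  | wk => cases hb

theorem MLL1_to_MLS1X_general (Γ : List Form)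
    (h : MLL1 (↑Γ : Multiset Form)) : Provable MLS1X (Form.bigOr Γ) :=
  h.provable_bigOr rfl

/-- If a nonempty sequent `⊢ Γ` is provable in `MLL1`, then the
formula `⋁Γ` is provable in `MLS1X`. -/
theorem MLL1_to_MLS1X (Γ : List Form) (hne : Γ ≠ [])
    (h : MLL1 (↑Γ : Multiset Form)) : Provable MLS1X (Form.bigOr Γ) :=
  MLL1_to_MLS1X_general Γ h
end

section
/- If A is a rectified first-order formula, then its graph ⟦A⟧ is a fograph, i.e., a logical cograph all of whose binders are legal. -/
set_option linter.unusedVariables false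

/-! ## Labelled graphs, fographs, fonets, skew bifibrations -/

/-- Vertex labels: atoms or variables. -/
inductive Label : Type where
  | atm : Form → Label
  | var : ℕ → Label

/-- A finite labelled graph with vertices drawn from `ℕ`. -/
structure LGraph : Type where
  V : Finset ℕ
  adj : ℕ → ℕ → Prop
  lab : ℕ → Label

namespace LGraph

/-- Well-formedness: `adj` is a symmetric irreflexive relation on `V`. -/
def WF (G : LGraph) : Prop :=
  (∀ u v, G.adj u v → G.adj v u) ∧ (∀ v, ¬ G.adj v v) ∧
  (∀ u v, G.adj u v → u ∈ G.V ∧ v ∈ G.V)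

/-- The single-vertex graph with label `l`. -/
def single (l : Label) : LGraph :=
  ⟨{0}, fun _ _ => False, fun _ => l⟩

/-- Disjoint union `G + H` (vertices of `G` are renamed to even numbers,
vertices of `H` to odd numbers). -/
def disjUnion (G H : LGraph) : LGraph where
  V := G.V.image (fun v => 2 * v) ∪ H.V.image (fun v => 2 * v + 1)
  adj u v :=
    (u % 2 = 0 ∧ v % 2 = 0 ∧ G.adj (u / 2) (v / 2)) ∨
    (u % 2 = 1 ∧ v % 2 = 1 ∧ H.adj (u / 2) (v / 2))
  lab u := if u % 2 = 0 then G.lab (u / 2) else H.lab (u / 2)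

/-- Join `G × H`: disjoint union plus all edges between the two parts. -/
def join (G H : LGraph) : LGraph where
  V := G.V.image (fun v => 2 * v) ∪ H.V.image (fun v => 2 * v + 1)
  adj u v :=
    (u % 2 = 0 ∧ v % 2 = 0 ∧ G.adj (u / 2) (v / 2)) ∨
    (u % 2 = 1 ∧ v % 2 = 1 ∧ H.adj (u / 2) (v / 2)) ∨
    (u % 2 = 0 ∧ v % 2 = 1 ∧ u / 2 ∈ G.V ∧ v / 2 ∈ H.V) ∨
    (u % 2 = 1 ∧ v % 2 = 0 ∧ u / 2 ∈ H.V ∧ v / 2 ∈ G.V)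
  lab u := if u % 2 = 0 then G.lab (u / 2) else H.lab (u / 2)

/-- A label-preserving isomorphism between two labelled graphs, given by the map `e`. -/
def IsoVia (G H : LGraph) (e : ℕ → ℕ) : Prop :=
  (∀ v ∈ G.V, e v ∈ H.V) ∧
  (∀ w ∈ H.V, ∃! v, v ∈ G.V ∧ e v = w) ∧
  (∀ u v, u ∈ G.V → v ∈ G.V → (G.adj u v ↔ H.adj (e u) (e v))) ∧
  (∀ v ∈ G.V, H.lab (e v) = G.lab v)

/-- Equality of labelled graphs up to label-preserving vertex renaming. -/
def Iso (G H : LGraph) : Prop := ∃ e, IsoVia G H e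

/-- `v` is a literal (an atom-labelled vertex). -/
def IsLiteral (G : LGraph) (v : ℕ) : Prop := v ∈ G.V ∧ ∃ a, G.lab v = .atm a

/-- `v` is a binder (a variable-labelled vertex). -/
def IsBinder (G : LGraph) (v : ℕ) : Prop := v ∈ G.V ∧ ∃ x, G.lab v = .var x

/-- `M` is a module: all vertices of `M` have the same neighbours outside `M`. -/
def IsModule (G : LGraph) (M : Finset ℕ) : Prop :=
  M ⊆ G.V ∧ ∀ v ∈ M, ∀ w ∈ M, ∀ u, u ∉ M → (G.adj v u ↔ G.adj w u)

/-- A module `M` is strong if every module is contained in `M`, contains `M`,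
or is disjoint from `M`. -/
def IsStrongModule (G : LGraph) (M : Finset ℕ) : Prop :=
  G.IsModule M ∧ ∀ M', G.IsModule M' → (M' ⊆ M ∨ M ⊆ M' ∨ Disjoint M M')

/-- A proper strong module has at least two vertices. -/
def IsProperStrongModule (G : LGraph) (M : Finset ℕ) : Prop :=
  G.IsStrongModule M ∧ 2 ≤ M.card

/-- `M` is the scope of the binder `b`: the smallest proper strong module containing `b`. -/
def IsScope (G : LGraph) (b : ℕ) (M : Finset ℕ) : Prop :=
  G.IsProperStrongModule M ∧ b ∈ M ∧
  ∀ M', G.IsProperStrongModule M' → b ∈ M' → M ⊆ M'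

/-- No induced path on four vertices. -/
def IsCograph (G : LGraph) : Prop :=
  ∀ v₁ v₂ v₃ v₄, v₁ ∈ G.V → v₂ ∈ G.V → v₃ ∈ G.V → v₄ ∈ G.V →
    v₁ ≠ v₂ → v₁ ≠ v₃ → v₁ ≠ v₄ → v₂ ≠ v₃ → v₂ ≠ v₄ → v₃ ≠ v₄ →
    ¬ (G.adj v₁ v₂ ∧ G.adj v₂ v₃ ∧ G.adj v₃ v₄ ∧
       ¬ G.adj v₁ v₃ ∧ ¬ G.adj v₁ v₄ ∧ ¬ G.adj v₂ v₄)

/-- A logical cograph: a cograph whose vertices are labelled by atoms or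
variables, with at least one atom-labelled vertex. -/
def IsLogical (G : LGraph) : Prop :=
  G.WF ∧ G.IsCograph ∧
  (∀ v ∈ G.V, ∀ a, G.lab v = .atm a → a.IsAtom) ∧
  (∃ v, G.IsLiteral v)

/-- The binder `b` is existential: adjacent to every other vertex of its scope. -/
def ExBinder (G : LGraph) (b : ℕ) : Prop :=
  G.IsBinder b ∧ ∃ M, G.IsScope b M ∧ ∀ v ∈ M, v ≠ b → G.adj b v

/-- The binder `b` is universal: adjacent to no other vertex of its scope. -/
def UnivBinder (G : LGraph) (b : ℕ) : Prop :=
  G.IsBinder b ∧ ∃ M, G.IsScope b M ∧ ∀ v ∈ M, v ≠ b → ¬ G.adj b v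

/-- An `x`-binder is legal if its scope contains no other `x`-binder and
at least one literal. -/
def LegalBinder (G : LGraph) (b : ℕ) : Prop :=
  ∃ x M, G.lab b = .var x ∧ G.IsScope b M ∧
    (∀ v ∈ M, v ≠ b → G.lab v ≠ .var x) ∧ (∃ l ∈ M, G.IsLiteral l)

/-- A fograph: a logical cograph all of whose binders are legal. -/
def IsFograph (G : LGraph) : Prop :=
  G.IsLogical ∧ ∀ b, G.IsBinder b → G.LegalBinder b

/-- The binder `b` binds the literal `l`: `l` is in the scope of the `x`-binder `b`
and the atom of `l` contains `x`.  (This is the edge relation of the binding graph.) -/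
def Binds (G : LGraph) (b l : ℕ) : Prop :=
  ∃ x M, b ∈ G.V ∧ G.lab b = .var x ∧ G.IsScope b M ∧ l ∈ M ∧
    ∃ a, G.lab l = .atm a ∧ a.FreeVar x

end LGraph

/-- The fograph `⟦A⟧` of a formula. -/
def Form.graphOf : Form → LGraph
  | .and A B => A.graphOf.join B.graphOf
  | .or A B => A.graphOf.disjUnion B.graphOf
  | .all x A => (LGraph.single (.var x)).disjUnion A.graphOf
  | .ex x A => (LGraph.single (.var x)).join A.graphOf
  | a => LGraph.single (.atm a)

/-- Two atoms are pre-dual if neither is `⊤` or `⊥` and their predicate symbols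
are dual. -/
def PreDual : Form → Form → Prop
  | .pos p _, .neg q _ => p = q
  | .neg p _, .pos q _ => p = q
  | _, _ => False

/-- `r` is a linking on the fograph `G`: a partial equivalence relation whose
classes consist of two pre-dual literals, such that every literal is `⊤`-labelled
or belongs to a link. -/
structure IsLinking (G : LGraph) (r : ℕ → ℕ → Prop) : Prop where
  symm : ∀ u v, r u v → r v u
  trans : ∀ u v w, r u v → r v w → r u w
  lit : ∀ u v, r u v → G.IsLiteral u
  two : ∀ u, r u u → ∃! w, w ≠ u ∧ r u w
  predual : ∀ u v, r u v → u ≠ v →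
    ∃ a b, G.lab u = .atm a ∧ G.lab v = .atm b ∧ PreDual a b
  cover : ∀ v, G.IsLiteral v → G.lab v = .atm .top ∨ r v v

/-- A linked fograph. -/
def LinkedFograph (G : LGraph) (r : ℕ → ℕ → Prop) : Prop :=
  G.IsFograph ∧ IsLinking G r

/-- `σ` unifies the pre-dual atoms `a` and `b` (after identifying dual predicate
symbols). -/
def UnifiedBy (σ : ℕ → Term) : Form → Form → Prop
  | .pos p ts, .neg q us => p = q ∧ ts.map (Term.subst σ) = us.map (Term.subst σ)
  | .neg p ts, .pos q us => p = q ∧ ts.map (Term.subst σ) = us.map (Term.subst σ)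
  | _, _ => False

/-- `σ` is a dualizer of `(G, r)`: it unifies all the links. -/
def IsDualizer (G : LGraph) (r : ℕ → ℕ → Prop) (σ : ℕ → Term) : Prop :=
  ∀ u v, r u v → u ≠ v → ∀ a b, G.lab u = .atm a → G.lab v = .atm b → UnifiedBy σ a b

/-- `δ` is a most general dualizer of `(G, r)`. -/
def IsMGD (G : LGraph) (r : ℕ → ℕ → Prop) (δ : ℕ → Term) : Prop :=
  IsDualizer G r δ ∧ ∀ σ, IsDualizer G r σ → ∃ τ, ∀ x, σ x = (δ x).subst τ

/-- A dependency: an existential `x`-binder `b` and a universal `y`-binder `c`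
such that the most general dualizer assigns to `x` a term containing `y`. -/
def Dependency (G : LGraph) (r : ℕ → ℕ → Prop) (b c : ℕ) : Prop :=
  ∃ x y, b ∈ G.V ∧ c ∈ G.V ∧ G.lab b = .var x ∧ G.lab c = .var y ∧
    G.ExBinder b ∧ G.UnivBinder c ∧ ∃ δ, IsMGD G r δ ∧ (δ x).HasVar y

/-- A leap: a link or a dependency.  This is the edge relation of the leap graph. -/
def Leap (G : LGraph) (r : ℕ → ℕ → Prop) (u v : ℕ) : Prop :=
  (r u v ∧ u ≠ v) ∨ Dependency G r u v ∨ Dependency G r v u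

/-- `W` induces a matching w.r.t. the adjacency `adj`: `W` is nonempty and every
`w ∈ W` has exactly one neighbour inside `W`. -/
def InducesMatching (V : Finset ℕ) (adj : ℕ → ℕ → Prop) (W : Finset ℕ) : Prop :=
  W.Nonempty ∧ W ⊆ V ∧ ∀ w ∈ W, ∃! u, u ∈ W ∧ adj w u

/-- `W` induces a bimatching: a matching in the fograph and in its leap graph. -/
def InducesBimatching (G : LGraph) (r : ℕ → ℕ → Prop) (W : Finset ℕ) : Prop :=
  InducesMatching G.V G.adj W ∧ InducesMatching G.V (Leap G r) W

/-- A fonet: a linked fograph that has a dualizer and no induced bimatching. -/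
def IsFonet (G : LGraph) (r : ℕ → ℕ → Prop) : Prop :=
  LinkedFograph G r ∧ (∃ σ, IsDualizer G r σ) ∧ ∀ W, ¬ InducesBimatching G r W

/-- Application of a variable renaming to a label. -/
def Label.rename (ρ : ℕ → ℕ) : Label → Label
  | .atm a => .atm (a.renameAll ρ)
  | .var x => .var (ρ x)

/-- The variable `x` occurs in (a label of) the graph `G`. -/
def LGraph.VarOccursIn (G : LGraph) (x : ℕ) : Prop :=
  ∃ v ∈ G.V, G.lab v = .var x ∨ ∃ a, G.lab v = .atm a ∧ a.FreeVar x

/-- A fograph homomorphism `(φ, ρ)`: a graph homomorphism together with a variable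
renaming `ρ` (the substitution induced by `φ`), the identity on variables not in `G`,
such that labels are preserved up to `ρ`. -/
structure FographHom (G H : LGraph) (φ : ℕ → ℕ) (ρ : ℕ → ℕ) : Prop where
  maps : ∀ v ∈ G.V, φ v ∈ H.V
  hom : ∀ u v, G.adj u v → H.adj (φ u) (φ v)
  labels : ∀ v ∈ G.V, H.lab (φ v) = (G.lab v).rename ρ
  idOutside : ∀ x, ¬ G.VarOccursIn x → ρ x = x

/-- `φ` is a skew fibration on the underlying graphs. -/
def SkewFib (G H : LGraph) (φ : ℕ → ℕ) : Prop :=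
  ∀ v ∈ G.V, ∀ w, H.adj w (φ v) → ∃ w', G.adj w' v ∧ ¬ H.adj (φ w') w

/-- `φ` is a fibration on the binding graphs (a directed graph fibration). -/
def BindingFib (G H : LGraph) (φ : ℕ → ℕ) : Prop :=
  ∀ v ∈ G.V, ∀ w, H.Binds w (φ v) → ∃! w', G.Binds w' v ∧ φ w' = w

/-- `φ` preserves existential binders. -/
def PreservesEx (G H : LGraph) (φ : ℕ → ℕ) : Prop :=
  ∀ b, G.ExBinder b → H.ExBinder (φ b)

/-- A skew bifibration. -/
def SkewBifib (G H : LGraph) (φ : ℕ → ℕ) (ρ : ℕ → ℕ) : Prop :=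
  FographHom G H φ ρ ∧ PreservesEx G H φ ∧ SkewFib G H φ ∧ BindingFib G H φ

/-- A first-order combinatorial proof of the formula `A`: a skew bifibration
`φ : C → ⟦A⟧` (with induced renaming `ρ`) whose source `(C, r)` is a fonet. -/
def FOCP (A : Form) (C : LGraph) (r : ℕ → ℕ → Prop) (φ : ℕ → ℕ) (ρ : ℕ → ℕ) : Prop :=
  IsFonet C r ∧ SkewBifib C A.graphOf φ ρ

/-- `A` has a first-order combinatorial proof. -/
def HasFOCP (A : Form) : Prop := ∃ C r φ ρ, FOCP A C r φ ρ

namespace FoAux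

open LGraph

variable {G H : LGraph}

lemma mem_opV_iff {u : ℕ} :
    u ∈ (G.disjUnion H).V ↔ (u % 2 = 0 ∧ u / 2 ∈ G.V) ∨ (u % 2 = 1 ∧ u / 2 ∈ H.V) := by
  simp only [LGraph.disjUnion, Finset.mem_union, Finset.mem_image]
  constructor
  · rintro (⟨v, hv, rfl⟩ | ⟨v, hv, rfl⟩)
    · left; constructor; omega
      have : 2 * v / 2 = v := by omega
      rwa [this]
    · right; constructor; omega
      have : (2 * v + 1) / 2 = v := by omega
      rwa [this]
  · rintro (⟨h0, hv⟩ | ⟨h1, hv⟩)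
    · exact Or.inl ⟨u / 2, hv, by omega⟩
    · exact Or.inr ⟨u / 2, hv, by omega⟩

lemma joinV_eq : (G.join H).V = (G.disjUnion H).V := rfl

lemma mem_joinV_iff {u : ℕ} :
    u ∈ (G.join H).V ↔ (u % 2 = 0 ∧ u / 2 ∈ G.V) ∨ (u % 2 = 1 ∧ u / 2 ∈ H.V) := by
  rw [joinV_eq]; exact mem_opV_iff

lemma even_mem_opV {u : ℕ} (h : u ∈ G.V) : 2 * u ∈ (G.disjUnion H).V := by
  rw [mem_opV_iff]; left; constructor; omega
  have : 2 * u / 2 = u := by omega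
  rwa [this]

lemma odd_mem_opV {u : ℕ} (h : u ∈ H.V) : 2 * u + 1 ∈ (G.disjUnion H).V := by
  rw [mem_opV_iff]; right; constructor; omega
  have : (2 * u + 1) / 2 = u := by omega
  rwa [this]

lemma even_mem_joinV {u : ℕ} (h : u ∈ G.V) : 2 * u ∈ (G.join H).V := by
  rw [joinV_eq]; exact even_mem_opV h

lemma odd_mem_joinV {u : ℕ} (h : u ∈ H.V) : 2 * u + 1 ∈ (G.join H).V := by
  rw [joinV_eq]; exact odd_mem_opV h

lemma lab_op_even {u : ℕ} (h : u % 2 = 0) : (G.disjUnion H).lab u = G.lab (u / 2) := by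
  simp [LGraph.disjUnion, h]

lemma lab_op_odd {u : ℕ} (h : u % 2 = 1) : (G.disjUnion H).lab u = H.lab (u / 2) := by
  simp [LGraph.disjUnion, h]

lemma lab_join_even {u : ℕ} (h : u % 2 = 0) : (G.join H).lab u = G.lab (u / 2) := by
  simp [LGraph.join, h]

lemma lab_join_odd {u : ℕ} (h : u % 2 = 1) : (G.join H).lab u = H.lab (u / 2) := by
  simp [LGraph.join, h]

lemma du_adj_ee {u v : ℕ} : (G.disjUnion H).adj (2 * u) (2 * v) ↔ G.adj u v := by
  simp only [LGraph.disjUnion]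
  constructor
  · rintro (⟨h1, h2, h3⟩ | ⟨h1, h2, h3⟩)
    · have e1 : 2 * u / 2 = u := by omega
      have e2 : 2 * v / 2 = v := by omega
      rwa [e1, e2] at h3
    · omega
  · intro h
    left
    refine ⟨by omega, by omega, ?_⟩
    have e1 : 2 * u / 2 = u := by omega
    have e2 : 2 * v / 2 = v := by omega
    rwa [e1, e2]

lemma du_adj_oo {u v : ℕ} : (G.disjUnion H).adj (2 * u + 1) (2 * v + 1) ↔ H.adj u v := by
  simp only [LGraph.disjUnion]
  constructor
  · rintro (⟨h1, h2, h3⟩ | ⟨h1, h2, h3⟩)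
    · omega
    · have e1 : (2 * u + 1) / 2 = u := by omega
      have e2 : (2 * v + 1) / 2 = v := by omega
      rwa [e1, e2] at h3
  · intro h
    right
    refine ⟨by omega, by omega, ?_⟩
    have e1 : (2 * u + 1) / 2 = u := by omega
    have e2 : (2 * v + 1) / 2 = v := by omega
    rwa [e1, e2]

lemma du_adj_parity {u v : ℕ} (h : (G.disjUnion H).adj u v) : u % 2 = v % 2 := by
  rcases h with ⟨h1, h2, _⟩ | ⟨h1, h2, _⟩ <;> omega

lemma join_adj_ee {u v : ℕ} : (G.join H).adj (2 * u) (2 * v) ↔ G.adj u v := by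
  simp only [LGraph.join]
  constructor
  · rintro (⟨h1, h2, h3⟩ | ⟨h1, h2, h3⟩ | ⟨h1, h2, h3⟩ | ⟨h1, h2, h3⟩)
    · have e1 : 2 * u / 2 = u := by omega
      have e2 : 2 * v / 2 = v := by omega
      rwa [e1, e2] at h3
    all_goals omega
  · intro h
    left
    refine ⟨by omega, by omega, ?_⟩
    have e1 : 2 * u / 2 = u := by omega
    have e2 : 2 * v / 2 = v := by omega
    rwa [e1, e2]

lemma join_adj_oo {u v : ℕ} : (G.join H).adj (2 * u + 1) (2 * v + 1) ↔ H.adj u v := by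
  simp only [LGraph.join]
  constructor
  · rintro (⟨h1, h2, h3⟩ | ⟨h1, h2, h3⟩ | ⟨h1, h2, h3⟩ | ⟨h1, h2, h3⟩)
    · omega
    · have e1 : (2 * u + 1) / 2 = u := by omega
      have e2 : (2 * v + 1) / 2 = v := by omega
      rwa [e1, e2] at h3
    all_goals omega
  · intro h
    right; left
    refine ⟨by omega, by omega, ?_⟩
    have e1 : (2 * u + 1) / 2 = u := by omega
    have e2 : (2 * v + 1) / 2 = v := by omega
    rwa [e1, e2]

lemma join_adj_eo {u v : ℕ} : (G.join H).adj (2 * u) (2 * v + 1) ↔ (u ∈ G.V ∧ v ∈ H.V) := by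
  simp only [LGraph.join]
  have e1 : 2 * u / 2 = u := by omega
  have e2 : (2 * v + 1) / 2 = v := by omega
  constructor
  · rintro (⟨h1, h2, h3⟩ | ⟨h1, h2, h3⟩ | ⟨h1, h2, h3, h4⟩ | ⟨h1, h2, h3⟩)
    · omega
    · omega
    · rw [e1] at h3; rw [e2] at h4; exact ⟨h3, h4⟩
    · omega
  · rintro ⟨h1, h2⟩
    right; right; left
    refine ⟨by omega, by omega, ?_, ?_⟩
    · rwa [e1]
    · rwa [e2]

lemma join_adj_oe {u v : ℕ} : (G.join H).adj (2 * u + 1) (2 * v) ↔ (u ∈ H.V ∧ v ∈ G.V) := by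
  simp only [LGraph.join]
  have e1 : (2 * u + 1) / 2 = u := by omega
  have e2 : 2 * v / 2 = v := by omega
  constructor
  · rintro (⟨h1, h2, h3⟩ | ⟨h1, h2, h3⟩ | ⟨h1, h2, h3, h4⟩ | ⟨h1, h2, h3, h4⟩)
    · omega
    · omega
    · omega
    · rw [e1] at h3; rw [e2] at h4; exact ⟨h3, h4⟩
  · rintro ⟨h1, h2⟩
    right; right; right
    refine ⟨by omega, by omega, ?_, ?_⟩
    · rwa [e1]
    · rwa [e2]

lemma wf_single {l : Label} : (LGraph.single l).WF := by
  refine ⟨fun u v h => h.elim, fun v h => h.elim, fun u v h => h.elim⟩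

lemma wf_disjUnion (hG : G.WF) (hH : H.WF) : (G.disjUnion H).WF := by
  refine ⟨?_, ?_, ?_⟩
  · rintro u v (⟨h1, h2, h3⟩ | ⟨h1, h2, h3⟩)
    · exact Or.inl ⟨h2, h1, hG.1 _ _ h3⟩
    · exact Or.inr ⟨h2, h1, hH.1 _ _ h3⟩
  · rintro v (⟨h1, h2, h3⟩ | ⟨h1, h2, h3⟩)
    · exact hG.2.1 _ h3
    · exact hH.2.1 _ h3
  · rintro u v (⟨h1, h2, h3⟩ | ⟨h1, h2, h3⟩)
    · have := hG.2.2 _ _ h3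
      exact ⟨mem_opV_iff.2 (Or.inl ⟨h1, this.1⟩), mem_opV_iff.2 (Or.inl ⟨h2, this.2⟩)⟩
    · have := hH.2.2 _ _ h3
      exact ⟨mem_opV_iff.2 (Or.inr ⟨h1, this.1⟩), mem_opV_iff.2 (Or.inr ⟨h2, this.2⟩)⟩

lemma wf_join (hG : G.WF) (hH : H.WF) : (G.join H).WF := by
  refine ⟨?_, ?_, ?_⟩
  · rintro u v (⟨h1, h2, h3⟩ | ⟨h1, h2, h3⟩ | ⟨h1, h2, h3, h4⟩ | ⟨h1, h2, h3, h4⟩)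
    · exact Or.inl ⟨h2, h1, hG.1 _ _ h3⟩
    · exact Or.inr (Or.inl ⟨h2, h1, hH.1 _ _ h3⟩)
    · exact Or.inr (Or.inr (Or.inr ⟨h2, h1, h4, h3⟩))
    · exact Or.inr (Or.inr (Or.inl ⟨h2, h1, h4, h3⟩))
  · rintro v (⟨h1, h2, h3⟩ | ⟨h1, h2, h3⟩ | ⟨h1, h2, h3, h4⟩ | ⟨h1, h2, h3, h4⟩)
    · exact hG.2.1 _ h3
    · exact hH.2.1 _ h3
    · omega
    · omega
  · rintro u v (⟨h1, h2, h3⟩ | ⟨h1, h2, h3⟩ | ⟨h1, h2, h3, h4⟩ | ⟨h1, h2, h3, h4⟩)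
    · have := hG.2.2 _ _ h3
      exact ⟨mem_joinV_iff.2 (Or.inl ⟨h1, this.1⟩), mem_joinV_iff.2 (Or.inl ⟨h2, this.2⟩)⟩
    · have := hH.2.2 _ _ h3
      exact ⟨mem_joinV_iff.2 (Or.inr ⟨h1, this.1⟩), mem_joinV_iff.2 (Or.inr ⟨h2, this.2⟩)⟩
    · exact ⟨mem_joinV_iff.2 (Or.inl ⟨h1, h3⟩), mem_joinV_iff.2 (Or.inr ⟨h2, h4⟩)⟩
    · exact ⟨mem_joinV_iff.2 (Or.inr ⟨h1, h3⟩), mem_joinV_iff.2 (Or.inl ⟨h2, h4⟩)⟩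

end FoAux
namespace FoAux2
open LGraph FoAux

variable {G H B : LGraph} {M M' K : Finset ℕ} {b : ℕ}

def ClosedIn (G : LGraph) (K : Finset ℕ) : Prop :=
  ∀ u ∈ K, ∀ v, v ∉ K → ¬ G.adj u v

def CoClosedIn (G : LGraph) (K : Finset ℕ) : Prop :=
  ∀ u ∈ K, ∀ v ∈ G.V, v ∉ K → G.adj u v

def Isol (G : LGraph) (b : ℕ) : Prop := ∀ u, ¬ G.adj b u

def Domin (G : LGraph) (b : ℕ) : Prop := ∀ u ∈ G.V, u ≠ b → G.adj b u

lemma sdiff_nonempty_of_ne (h1 : M ⊆ G.V) (h2 : M ≠ G.V) : (G.V \ M).Nonempty := by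
  rw [Finset.sdiff_nonempty]
  intro hsub
  exact h2 (Finset.Subset.antisymm h1 hsub)

/-- Key lemma: a nonempty closed subset of a strong module `M ≠ V` is all of `M`. -/
lemma strong_eq_of_closed (hwf : G.WF) (hM : G.IsStrongModule M) (hMV : M ≠ G.V)
    (hKM : K ⊆ M) (hK : K.Nonempty) (hcl : ClosedIn G K) : K = M := by
  by_contra hne
  obtain ⟨v, hvM, hvK⟩ : ∃ v, v ∈ M ∧ v ∉ K := by
    by_contra hc
    push_neg at hc
    exact hne (Finset.Subset.antisymm hKM hc)
  obtain ⟨k, hk⟩ := hK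
  have claim1 : ∀ m ∈ M, ∀ u, u ∉ M → ¬ G.adj m u := by
    intro m hm u hu hadj
    have h2 := hM.1.2 m hm k (hKM hk) u hu
    exact hcl k hk u (fun hc => hu (hKM hc)) (h2.1 hadj)
  have hMV' := hM.1.1
  set N := K ∪ (G.V \ M) with hN
  have hNnone : ∀ n ∈ N, ∀ u, u ∉ N → ¬ G.adj n u := by
    intro n hn u hu hadj
    rcases Finset.mem_union.1 hn with hnK | hnD
    · exact hcl n hnK u (fun hc => hu (Finset.mem_union.2 (Or.inl hc))) hadj
    · have hnM : n ∉ M := (Finset.mem_sdiff.1 hnD).2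
      by_cases huM : u ∈ M
      · exact claim1 u huM n hnM (hwf.1 _ _ hadj)
      · have huV : u ∈ G.V := (hwf.2.2 _ _ hadj).2
        exact hu (Finset.mem_union.2 (Or.inr (Finset.mem_sdiff.2 ⟨huV, huM⟩)))
  have hNmod : G.IsModule N := by
    constructor
    · intro x hx
      rcases Finset.mem_union.1 hx with h | h
      · exact hMV' (hKM h)
      · exact (Finset.mem_sdiff.1 h).1
    · intro n1 h1 n2 h2 u hu
      exact iff_of_false (hNnone n1 h1 u hu) (hNnone n2 h2 u hu)
  rcases hM.2 N hNmod with h | h | h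
  · obtain ⟨w, hw⟩ := sdiff_nonempty_of_ne hMV' hMV
    have := h (Finset.mem_union.2 (Or.inr hw))
    exact (Finset.mem_sdiff.1 hw).2 this
  · have := h hvM
    rcases Finset.mem_union.1 this with hc | hc
    · exact hvK hc
    · exact (Finset.mem_sdiff.1 hc).2 hvM
  · exact (Finset.disjoint_left.1 h) (hKM hk) (Finset.mem_union.2 (Or.inl hk))

/-- Dual key lemma: a nonempty co-closed subset of a strong module `M ≠ V` is all of `M`. -/
lemma strong_eq_of_coclosed (hwf : G.WF) (hM : G.IsStrongModule M) (hMV : M ≠ G.V)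
    (hKM : K ⊆ M) (hK : K.Nonempty) (hcl : CoClosedIn G K) : K = M := by
  by_contra hne
  obtain ⟨v, hvM, hvK⟩ : ∃ v, v ∈ M ∧ v ∉ K := by
    by_contra hc
    push_neg at hc
    exact hne (Finset.Subset.antisymm hKM hc)
  obtain ⟨k, hk⟩ := hK
  have hMV' := hM.1.1
  have claim1 : ∀ m ∈ M, ∀ u ∈ G.V, u ∉ M → G.adj m u := by
    intro m hm u huV hu
    have h2 := hM.1.2 m hm k (hKM hk) u hu
    exact h2.2 (hcl k hk u huV (fun hc => hu (hKM hc)))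
  set N := K ∪ (G.V \ M) with hN
  have hNall : ∀ n ∈ N, ∀ u, u ∉ N → (G.adj n u ↔ (u ∈ G.V ∧ u ∈ M))  := by
    intro n hn u hu
    constructor
    · intro hadj
      have huV : u ∈ G.V := (hwf.2.2 _ _ hadj).2
      refine ⟨huV, ?_⟩
      by_contra huM
      exact hu (Finset.mem_union.2 (Or.inr (Finset.mem_sdiff.2 ⟨huV, huM⟩)))
    · rintro ⟨huV, huM⟩
      rcases Finset.mem_union.1 hn with hnK | hnD
      · exact hcl n hnK u huV (fun hc => hu (Finset.mem_union.2 (Or.inl hc)))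
      · exact hwf.1 _ _ (claim1 u huM n (Finset.mem_sdiff.1 hnD).1 (Finset.mem_sdiff.1 hnD).2)
  have hNmod : G.IsModule N := by
    constructor
    · intro x hx
      rcases Finset.mem_union.1 hx with h | h
      · exact hMV' (hKM h)
      · exact (Finset.mem_sdiff.1 h).1
    · intro n1 h1 n2 h2 u hu
      rw [hNall n1 h1 u hu, hNall n2 h2 u hu]
  rcases hM.2 N hNmod with h | h | h
  · obtain ⟨w, hw⟩ := sdiff_nonempty_of_ne hMV' hMV
    have := h (Finset.mem_union.2 (Or.inr hw))
    exact (Finset.mem_sdiff.1 hw).2 this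
  · have := h hvM
    rcases Finset.mem_union.1 this with hc | hc
    · exact hvK hc
    · exact (Finset.mem_sdiff.1 hc).2 hvM
  · exact (Finset.disjoint_left.1 h) (hKM hk) (Finset.mem_union.2 (Or.inl hk))

lemma V_isStrongModule (hwf : G.WF) : G.IsStrongModule G.V := by
  refine ⟨⟨Finset.Subset.refl _, ?_⟩, ?_⟩
  · intro v _ w _ u hu
    exact iff_of_false (fun h => hu (hwf.2.2 _ _ h).2) (fun h => hu (hwf.2.2 _ _ h).2)
  · intro M' hM'
    exact Or.inl hM'.1

lemma isol_of_closed_singleton (hwf : G.WF) (h : ClosedIn G {b}) : Isol G b := by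
  intro u hadj
  by_cases hu : u = b
  · exact hwf.2.1 b (hu ▸ hadj)
  · exact h b (Finset.mem_singleton_self b) u (by simp [hu]) hadj

lemma domin_of_coclosed_singleton (h : CoClosedIn G {b}) : Domin G b := by
  intro u hu hne
  exact h b (Finset.mem_singleton_self b) u hu (by simp [hne])

lemma closed_singleton_of_isol (hiso : Isol G b) : ClosedIn G {b} := by
  intro u hu v _ hadj
  rw [Finset.mem_singleton] at hu
  subst hu
  exact hiso v hadj

lemma coclosed_singleton_of_domin (hdom : Domin G b) : CoClosedIn G {b} := by
  intro u hu v hv hvne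
  rw [Finset.mem_singleton] at hu
  subst hu
  rw [Finset.mem_singleton] at hvne
  exact hdom v hv hvne

/-- An isolated vertex's scope is the whole graph. -/
lemma scope_V_of_isol (hwf : G.WF) (hb : b ∈ G.V) (hiso : Isol G b)
    (hcard : 2 ≤ G.V.card) : G.IsScope b G.V := by
  refine ⟨⟨V_isStrongModule hwf, hcard⟩, hb, ?_⟩
  intro M' hM' hbM'
  by_cases hMV : M' = G.V
  · rw [hMV]
  · have := strong_eq_of_closed hwf hM'.1 hMV (Finset.singleton_subset_iff.2 hbM')
      (Finset.singleton_nonempty b) (closed_singleton_of_isol hiso)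
    have hcard' := hM'.2
    rw [← this] at hcard'
    simp at hcard'

/-- A dominating vertex's scope is the whole graph. -/
lemma scope_V_of_domin (hwf : G.WF) (hb : b ∈ G.V) (hdom : Domin G b)
    (hcard : 2 ≤ G.V.card) : G.IsScope b G.V := by
  refine ⟨⟨V_isStrongModule hwf, hcard⟩, hb, ?_⟩
  intro M' hM' hbM'
  by_cases hMV : M' = G.V
  · rw [hMV]
  · have := strong_eq_of_coclosed hwf hM'.1 hMV (Finset.singleton_subset_iff.2 hbM')
      (Finset.singleton_nonempty b) (coclosed_singleton_of_domin hdom)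
    have hcard' := hM'.2
    rw [← this] at hcard'
    simp at hcard'

end FoAux2
namespace FoAux3
open LGraph FoAux FoAux2

variable {G H B : LGraph} {M M' K : Finset ℕ} {b : ℕ} {e : ℕ → ℕ}

structure IsEmb (G B : LGraph) (e : ℕ → ℕ) : Prop where
  inj : ∀ u v, e u = e v → u = v
  mapsV : ∀ v ∈ G.V, e v ∈ B.V
  labs : ∀ v ∈ G.V, B.lab (e v) = G.lab v
  adj_iff : ∀ u v, B.adj (e u) (e v) ↔ G.adj u v
  cross : ∀ u ∈ G.V, ∀ v ∈ G.V, ∀ w, (∀ z ∈ G.V, e z ≠ w) → (B.adj (e u) w ↔ B.adj (e v) w)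

def preim (G : LGraph) (e : ℕ → ℕ) (M' : Finset ℕ) : Finset ℕ :=
  G.V.filter (fun v => e v ∈ M')

lemma mem_preim {v : ℕ} : v ∈ preim G e M' ↔ v ∈ G.V ∧ e v ∈ M' := Finset.mem_filter

lemma module_image (he : IsEmb G B e) (hM : G.IsModule M) : B.IsModule (M.image e) := by
  constructor
  · intro x hx
    obtain ⟨u, hu, rfl⟩ := Finset.mem_image.1 hx
    exact he.mapsV u (hM.1 hu)
  · intro x hx y hy w hw
    obtain ⟨u, hu, rfl⟩ := Finset.mem_image.1 hx
    obtain ⟨v, hv, rfl⟩ := Finset.mem_image.1 hy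
    by_cases hz : ∃ z ∈ G.V, e z = w
    · obtain ⟨z, hzV, rfl⟩ := hz
      have hzM : z ∉ M := fun hc => hw (Finset.mem_image.2 ⟨z, hc, rfl⟩)
      rw [he.adj_iff, he.adj_iff]
      exact hM.2 u hu v hv z hzM
    · push_neg at hz
      exact he.cross u (hM.1 hu) v (hM.1 hv) w hz

lemma module_preim (he : IsEmb G B e) (hwfG : G.WF) (hM' : B.IsModule M') :
    G.IsModule (preim G e M') := by
  constructor
  · intro x hx
    exact (mem_preim.1 hx).1
  · intro u hu v hv w hw
    by_cases hwV : w ∈ G.V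
    · have hew : e w ∉ M' := fun hc => hw (mem_preim.2 ⟨hwV, hc⟩)
      rw [← he.adj_iff, ← he.adj_iff]
      exact hM'.2 (e u) (mem_preim.1 hu).2 (e v) (mem_preim.1 hv).2 (e w) hew
    · exact iff_of_false (fun h => hwV (hwfG.2.2 _ _ h).2) (fun h => hwV (hwfG.2.2 _ _ h).2)

lemma strong_preim (he : IsEmb G B e) (hwfG : G.WF) (hM' : B.IsStrongModule M') :
    G.IsStrongModule (preim G e M') := by
  refine ⟨module_preim he hwfG hM'.1, ?_⟩
  intro N hN
  rcases hM'.2 (N.image e) (module_image he hN) with h | h | h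
  · left
    intro n hn
    exact mem_preim.2 ⟨hN.1 hn, h (Finset.mem_image.2 ⟨n, hn, rfl⟩)⟩
  · right; left
    intro v hv
    have := h (mem_preim.1 hv).2
    obtain ⟨n, hn, hen⟩ := Finset.mem_image.1 this
    rwa [he.inj n v hen] at hn
  · right; right
    rw [Finset.disjoint_left]
    intro v hv hvN
    exact (Finset.disjoint_left.1 h) (mem_preim.1 hv).2 (Finset.mem_image.2 ⟨v, hvN, rfl⟩)

lemma strong_image (he : IsEmb G B e) (hwfG : G.WF) (hM : G.IsStrongModule M)
    (hmix : ∀ M', B.IsModule M' → (∃ w ∈ M', ∀ z ∈ G.V, e z ≠ w) →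
      (preim G e M').Nonempty → preim G e M' ⊆ M → preim G e M' = M) :
    B.IsStrongModule (M.image e) := by
  refine ⟨module_image he hM.1, ?_⟩
  intro M' hM'
  have hp := module_preim he hwfG hM'
  rcases hM.2 (preim G e M') hp with h | h | h
  · by_cases hout : ∃ w ∈ M', ∀ z ∈ G.V, e z ≠ w
    · by_cases hne : (preim G e M').Nonempty
      · have heq := hmix M' hM' hout hne h
        right; left
        intro x hx
        obtain ⟨v, hv, rfl⟩ := Finset.mem_image.1 hx
        rw [← heq] at hv
        exact (mem_preim.1 hv).2
      · right; right
        rw [Finset.disjoint_left]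
        intro x hx hxM'
        obtain ⟨v, hv, rfl⟩ := Finset.mem_image.1 hx
        exact hne ⟨v, mem_preim.2 ⟨hM.1.1 hv, hxM'⟩⟩
    · push_neg at hout
      left
      intro w hw
      obtain ⟨z, hzV, hez⟩ := hout w hw
      have : z ∈ preim G e M' := mem_preim.2 ⟨hzV, hez ▸ hw⟩
      exact Finset.mem_image.2 ⟨z, h this, hez⟩
  · right; left
    intro x hx
    obtain ⟨v, hv, rfl⟩ := Finset.mem_image.1 hx
    exact (mem_preim.1 (h hv)).2
  · right; right
    rw [Finset.disjoint_left]
    intro x hx hxM'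
    obtain ⟨v, hv, rfl⟩ := Finset.mem_image.1 hx
    exact (Finset.disjoint_left.1 h) hv (mem_preim.2 ⟨hM.1.1 hv, hxM'⟩)

lemma scope_image (he : IsEmb G B e) (hwfG : G.WF) (hbV : b ∈ G.V)
    (hsc : G.IsScope b M) (hstr : B.IsStrongModule (M.image e))
    (hsing : ∀ M', B.IsStrongModule M' → 2 ≤ M'.card → e b ∈ M' →
      preim G e M' = {b} → False) :
    B.IsScope (e b) (M.image e) := by
  have hcard : (M.image e).card = M.card :=
    Finset.card_image_of_injOn (fun u _ v _ h => he.inj u v h)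
  refine ⟨⟨hstr, by rw [hcard]; exact hsc.1.2⟩,
    Finset.mem_image.2 ⟨b, hsc.2.1, rfl⟩, ?_⟩
  intro M' hps hbM'
  have hp := strong_preim he hwfG hps.1
  have hbp : b ∈ preim G e M' := mem_preim.2 ⟨hbV, hbM'⟩
  by_cases hc : 2 ≤ (preim G e M').card
  · have hsub := hsc.2.2 (preim G e M') ⟨hp, hc⟩ hbp
    intro x hx
    obtain ⟨v, hv, rfl⟩ := Finset.mem_image.1 hx
    exact (mem_preim.1 (hsub hv)).2
  · exfalso
    apply hsing M' hps.1 hps.2 hbM'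
    push_neg at hc
    apply Finset.eq_singleton_iff_unique_mem.2
    refine ⟨hbp, ?_⟩
    intro x hx
    by_contra hne
    have : 2 ≤ (preim G e M').card := by
      have := Finset.one_lt_card.2 ⟨x, hx, b, hbp, hne⟩
      omega
    omega

end FoAux3
namespace FoAux4
open LGraph FoAux FoAux2 FoAux3

variable {G H : LGraph} {M M' : Finset ℕ} {b : ℕ}

lemma isEmb_du_even (hwfG : G.WF) : IsEmb G (G.disjUnion H) (fun v => 2 * v) := by
  refine ⟨fun u v h => by omega, fun v hv => even_mem_opV hv, ?_, fun u v => du_adj_ee, ?_⟩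
  · intro v hv
    rw [lab_op_even (by omega : 2 * v % 2 = 0)]
    congr 1
    omega
  · intro u hu v hv w hw
    apply iff_of_false <;> intro hadj
    · have hp := du_adj_parity hadj
      have hwe : w = 2 * (w / 2) := by omega
      rw [hwe] at hadj
      have := du_adj_ee.1 hadj
      exact hw (w / 2) (hwfG.2.2 _ _ this).2 (by omega)
    · have hp := du_adj_parity hadj
      have hwe : w = 2 * (w / 2) := by omega
      rw [hwe] at hadj
      have := du_adj_ee.1 hadj
      exact hw (w / 2) (hwfG.2.2 _ _ this).2 (by omega)

lemma isEmb_du_odd (hwfH : H.WF) : IsEmb H (G.disjUnion H) (fun v => 2 * v + 1) := by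
  refine ⟨fun u v h => by omega, fun v hv => odd_mem_opV hv, ?_, fun u v => du_adj_oo, ?_⟩
  · intro v hv
    rw [lab_op_odd (by omega : (2 * v + 1) % 2 = 1)]
    congr 1
    omega
  · intro u hu v hv w hw
    apply iff_of_false <;> intro hadj
    · have hp := du_adj_parity hadj
      have hwe : w = 2 * (w / 2) + 1 := by omega
      rw [hwe] at hadj
      have := du_adj_oo.1 hadj
      exact hw (w / 2) (hwfH.2.2 _ _ this).2 (by omega)
    · have hp := du_adj_parity hadj
      have hwe : w = 2 * (w / 2) + 1 := by omega
      rw [hwe] at hadj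
      have := du_adj_oo.1 hadj
      exact hw (w / 2) (hwfH.2.2 _ _ this).2 (by omega)

lemma isEmb_join_even (hwfG : G.WF) : IsEmb G (G.join H) (fun v => 2 * v) := by
  refine ⟨fun u v h => by omega, fun v hv => even_mem_joinV hv, ?_, fun u v => join_adj_ee, ?_⟩
  · intro v hv
    rw [lab_join_even (by omega : 2 * v % 2 = 0)]
    congr 1
    omega
  · intro u hu v hv w hw
    by_cases hpar : w % 2 = 0
    · have hwe : w = 2 * (w / 2) := by omega
      rw [hwe, join_adj_ee, join_adj_ee]
      apply iff_of_false <;> intro hadj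
      · exact hw (w / 2) (hwfG.2.2 _ _ hadj).2 (by omega)
      · exact hw (w / 2) (hwfG.2.2 _ _ hadj).2 (by omega)
    · have hwe : w = 2 * (w / 2) + 1 := by omega
      rw [hwe, join_adj_eo, join_adj_eo]
      simp [hu, hv]

lemma isEmb_join_odd (hwfH : H.WF) : IsEmb H (G.join H) (fun v => 2 * v + 1) := by
  refine ⟨fun u v h => by omega, fun v hv => odd_mem_joinV hv, ?_, fun u v => join_adj_oo, ?_⟩
  · intro v hv
    rw [lab_join_odd (by omega : (2 * v + 1) % 2 = 1)]
    congr 1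
    omega
  · intro u hu v hv w hw
    by_cases hpar : w % 2 = 1
    · have hwe : w = 2 * (w / 2) + 1 := by omega
      rw [hwe, join_adj_oo, join_adj_oo]
      apply iff_of_false <;> intro hadj
      · exact hw (w / 2) (hwfH.2.2 _ _ hadj).2 (by omega)
      · exact hw (w / 2) (hwfH.2.2 _ _ hadj).2 (by omega)
    · have hwe : w = 2 * (w / 2) := by omega
      rw [hwe, join_adj_oe, join_adj_oe]
      simp [hu, hv]

/-- A mixed module of a disjoint union has a closed trace on the left part. -/
lemma mixed_closed_du_even (hwfG : G.WF) (hM' : (G.disjUnion H).IsModule M')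
    (hw : ∃ w ∈ M', ∀ z ∈ G.V, 2 * z ≠ w) :
    ClosedIn G (preim G (fun v => 2 * v) M') := by
  intro u hu v hv hadj
  obtain ⟨huV, huM⟩ := mem_preim.1 hu
  have hvV : v ∈ G.V := (hwfG.2.2 _ _ hadj).2
  have hvM : 2 * v ∉ M' := fun hc => hv (mem_preim.2 ⟨hvV, hc⟩)
  obtain ⟨w, hwM, hwout⟩ := hw
  have hwB := hM'.1 hwM
  rcases mem_opV_iff.1 hwB with ⟨hp, hV2⟩ | ⟨hp, hV2⟩
  · exact hwout (w / 2) hV2 (by omega)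
  · have hiff := hM'.2 (2 * u) huM w hwM (2 * v) hvM
    have : (G.disjUnion H).adj w (2 * v) := hiff.1 (du_adj_ee.2 hadj)
    have := du_adj_parity this
    omega

lemma mixed_closed_du_odd (hwfH : H.WF) (hM' : (G.disjUnion H).IsModule M')
    (hw : ∃ w ∈ M', ∀ z ∈ H.V, 2 * z + 1 ≠ w) :
    ClosedIn H (preim H (fun v => 2 * v + 1) M') := by
  intro u hu v hv hadj
  obtain ⟨huV, huM⟩ := mem_preim.1 hu
  have hvV : v ∈ H.V := (hwfH.2.2 _ _ hadj).2
  have hvM : 2 * v + 1 ∉ M' := fun hc => hv (mem_preim.2 ⟨hvV, hc⟩)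
  obtain ⟨w, hwM, hwout⟩ := hw
  have hwB := hM'.1 hwM
  rcases mem_opV_iff.1 hwB with ⟨hp, hV2⟩ | ⟨hp, hV2⟩
  · have hiff := hM'.2 (2 * u + 1) huM w hwM (2 * v + 1) hvM
    have : (G.disjUnion H).adj w (2 * v + 1) := hiff.1 (du_adj_oo.2 hadj)
    have := du_adj_parity this
    omega
  · exact hwout (w / 2) hV2 (by omega)

/-- A mixed module of a join has a co-closed trace on the left part. -/
lemma mixed_coclosed_join_even (hwfG : G.WF) (hM' : (G.join H).IsModule M')
    (hw : ∃ w ∈ M', ∀ z ∈ G.V, 2 * z ≠ w) :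
    CoClosedIn G (preim G (fun v => 2 * v) M') := by
  intro u hu v hvV hv
  obtain ⟨huV, huM⟩ := mem_preim.1 hu
  have hvM : 2 * v ∉ M' := fun hc => hv (mem_preim.2 ⟨hvV, hc⟩)
  obtain ⟨w, hwM, hwout⟩ := hw
  have hwB := hM'.1 hwM
  rw [joinV_eq] at hwB
  rcases mem_opV_iff.1 hwB with ⟨hp, hV2⟩ | ⟨hp, hV2⟩
  · exact absurd (by omega : 2 * (w / 2) = w) (hwout (w / 2) hV2)
  · have hiff := hM'.2 (2 * u) huM w hwM (2 * v) hvM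
    have hwe : w = 2 * (w / 2) + 1 := by omega
    have hadj : (G.join H).adj w (2 * v) := by
      rw [hwe, join_adj_oe]
      exact ⟨hV2, hvV⟩
    exact join_adj_ee.1 (hiff.2 hadj)

lemma mixed_coclosed_join_odd (hwfH : H.WF) (hM' : (G.join H).IsModule M')
    (hw : ∃ w ∈ M', ∀ z ∈ H.V, 2 * z + 1 ≠ w) :
    CoClosedIn H (preim H (fun v => 2 * v + 1) M') := by
  intro u hu v hvV hv
  obtain ⟨huV, huM⟩ := mem_preim.1 hu
  have hvM : 2 * v + 1 ∉ M' := fun hc => hv (mem_preim.2 ⟨hvV, hc⟩)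
  obtain ⟨w, hwM, hwout⟩ := hw
  have hwB := hM'.1 hwM
  rw [joinV_eq] at hwB
  rcases mem_opV_iff.1 hwB with ⟨hp, hV2⟩ | ⟨hp, hV2⟩
  · have hiff := hM'.2 (2 * u + 1) huM w hwM (2 * v + 1) hvM
    have hwe : w = 2 * (w / 2) := by omega
    have hadj : (G.join H).adj w (2 * v + 1) := by
      rw [hwe, join_adj_eo]
      exact ⟨hV2, hvV⟩
    exact join_adj_oo.1 (hiff.2 hadj)
  · exact absurd (by omega : 2 * (w / 2) + 1 = w) (hwout (w / 2) hV2)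

end FoAux4
namespace FoAux5
open LGraph FoAux FoAux2 FoAux3 FoAux4

variable {G H B : LGraph} {M : Finset ℕ} {b : ℕ} {e : ℕ → ℕ}

lemma lit_image (he : IsEmb G B e) {l : ℕ} (hl : l ∈ G.V) (hlit : G.IsLiteral l) :
    B.IsLiteral (e l) := by
  obtain ⟨_, a, ha⟩ := hlit
  exact ⟨he.mapsV l hl, a, by rw [he.labs l hl]; exact ha⟩

lemma lift_closed (he : IsEmb G B e) (hwfG : G.WF) (hwfB : B.WF)
    (hsc : G.IsScope b M) (hflag : M ≠ G.V ∨ Isol G b ∨ Domin G b)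
    (hlitG : ∃ l ∈ G.V, G.IsLiteral l) (hlitM : ∃ l ∈ M, G.IsLiteral l)
    (hmixed : ∀ M'', B.IsModule M'' → (∃ w ∈ M'', ∀ z ∈ G.V, e z ≠ w) →
      ClosedIn G (preim G e M''))
    (hnocross : ∀ u ∈ G.V, ∀ w, (∀ z ∈ G.V, e z ≠ w) → ¬ B.adj (e u) w)
    (hout : ∃ w ∈ B.V, ∀ z ∈ G.V, e z ≠ w) :
    ∃ M2, B.IsScope (e b) M2 ∧ (∃ l ∈ M2, B.IsLiteral l) ∧
      (M2 ≠ B.V ∨ Isol B (e b) ∨ Domin B (e b)) := by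
  have hsubM : M ⊆ G.V := hsc.1.1.1.1
  have hbM := hsc.2.1
  have hbV := hsubM hbM
  have hcardM := hsc.1.2
  have hGcard : 2 ≤ G.V.card := le_trans hcardM (Finset.card_le_card hsubM)
  have himgne : ∀ N : Finset ℕ, N ⊆ G.V → N.image e ≠ B.V := by
    intro N hN heq
    obtain ⟨w, hwB, hwout⟩ := hout
    rw [← heq] at hwB
    obtain ⟨z, hz, hez⟩ := Finset.mem_image.1 hwB
    exact hwout z (hN hz) hez
  by_cases hMV : M = G.V
  · have hflag' : Isol G b ∨ Domin G b := by
      rcases hflag with h | h | h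
      · exact absurd hMV h
      · exact Or.inl h
      · exact Or.inr h
    rcases hflag' with hiso | hdom
    · -- isolated: scope becomes all of B
      have hisoB : Isol B (e b) := by
        intro u hadj
        by_cases hz : ∃ z ∈ G.V, e z = u
        · obtain ⟨z, hzV, rfl⟩ := hz
          exact hiso z ((he.adj_iff b z).1 hadj)
        · push_neg at hz
          exact hnocross b hbV u hz hadj
      have hcardB : 2 ≤ B.V.card := by
        have himg : G.V.image e ⊆ B.V := by
          intro x hx
          obtain ⟨z, hz, rfl⟩ := Finset.mem_image.1 hx
          exact he.mapsV z hz
        have h1 := Finset.card_le_card himg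
        rw [Finset.card_image_of_injOn (fun u _ v _ h => he.inj u v h)] at h1
        omega
      obtain ⟨l, hlV, hlit⟩ := hlitG
      exact ⟨B.V, scope_V_of_isol hwfB (he.mapsV b hbV) hisoB hcardB,
        ⟨e l, he.mapsV l hlV, lit_image he hlV hlit⟩, Or.inr (Or.inl hisoB)⟩
    · -- dominating: scope becomes image of all of G
      have hscV : G.IsScope b G.V := hMV ▸ hsc
      have hstr : B.IsStrongModule (G.V.image e) := by
        apply strong_image he hwfG (V_isStrongModule hwfG)
        intro M'' hm hw hpne hsub
        have hcl := hmixed M'' hm hw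
        have hbp : b ∈ preim G e M'' := by
          by_contra hbp
          obtain ⟨u, hu⟩ := hpne
          have huV := (mem_preim.1 hu).1
          have hub : u ≠ b := fun h => hbp (h ▸ hu)
          exact hcl u hu b hbp (hwfG.1 _ _ (hdom u huV hub))
        apply Finset.Subset.antisymm hsub
        intro v hvV
        by_contra hvp
        have hvb : v ≠ b := fun h => hvp (h ▸ hbp)
        exact hcl b hbp v hvp (hdom v hvV hvb)
      have hsing : ∀ M'', B.IsStrongModule M'' → 2 ≤ M''.card → e b ∈ M'' →
          preim G e M'' = {b} → False := by
        intro M'' hstr'' hcard'' hbM'' hpre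
        have hwout : ∃ w ∈ M'', ∀ z ∈ G.V, e z ≠ w := by
          obtain ⟨w, hwM, hwne⟩ := Finset.exists_mem_ne (show 1 < M''.card by omega) (e b)
          refine ⟨w, hwM, fun z hz heq => ?_⟩
          have hzp : z ∈ preim G e M'' := mem_preim.2 ⟨hz, heq ▸ hwM⟩
          rw [hpre, Finset.mem_singleton] at hzp
          exact hwne (by rw [← heq, hzp])
        have hcl := hmixed M'' hstr''.1 hwout
        rw [hpre] at hcl
        have hiso := isol_of_closed_singleton hwfG hcl
        obtain ⟨u, huV, hub⟩ := Finset.exists_mem_ne (by omega : 1 < G.V.card) b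
        exact hiso u (hdom u huV hub)
      obtain ⟨l, hlV, hlit⟩ := hlitG
      exact ⟨G.V.image e, scope_image he hwfG hbV hscV hstr hsing,
        ⟨e l, Finset.mem_image.2 ⟨l, hlV, rfl⟩, lit_image he hlV hlit⟩,
        Or.inl (himgne _ (Finset.Subset.refl _))⟩
  · -- stable case
    have hstr : B.IsStrongModule (M.image e) := by
      apply strong_image he hwfG hsc.1.1
      intro M'' hm hw hpne hsub
      exact strong_eq_of_closed hwfG hsc.1.1 hMV hsub hpne (hmixed M'' hm hw)
    have hsing : ∀ M'', B.IsStrongModule M'' → 2 ≤ M''.card → e b ∈ M'' →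
        preim G e M'' = {b} → False := by
      intro M'' hstr'' hcard'' hbM'' hpre
      have hwout : ∃ w ∈ M'', ∀ z ∈ G.V, e z ≠ w := by
        obtain ⟨w, hwM, hwne⟩ := Finset.exists_mem_ne (show 1 < M''.card by omega) (e b)
        refine ⟨w, hwM, fun z hz heq => ?_⟩
        have hzp : z ∈ preim G e M'' := mem_preim.2 ⟨hz, heq ▸ hwM⟩
        rw [hpre, Finset.mem_singleton] at hzp
        exact hwne (by rw [← heq, hzp])
      have hcl := hmixed M'' hstr''.1 hwout
      rw [hpre] at hcl
      have := strong_eq_of_closed hwfG hsc.1.1 hMV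
        (Finset.singleton_subset_iff.2 hbM) (Finset.singleton_nonempty b) hcl
      rw [← this] at hcardM
      simp at hcardM
    obtain ⟨l, hlM, hlit⟩ := hlitM
    exact ⟨M.image e, scope_image he hwfG hbV hsc hstr hsing,
      ⟨e l, Finset.mem_image.2 ⟨l, hlM, rfl⟩, lit_image he (hsubM hlM) hlit⟩,
      Or.inl (himgne _ hsubM)⟩

lemma lift_coclosed (he : IsEmb G B e) (hwfG : G.WF) (hwfB : B.WF)
    (hsc : G.IsScope b M) (hflag : M ≠ G.V ∨ Isol G b ∨ Domin G b)
    (hlitG : ∃ l ∈ G.V, G.IsLiteral l) (hlitM : ∃ l ∈ M, G.IsLiteral l)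
    (hmixed : ∀ M'', B.IsModule M'' → (∃ w ∈ M'', ∀ z ∈ G.V, e z ≠ w) →
      CoClosedIn G (preim G e M''))
    (hallcross : ∀ u ∈ G.V, ∀ w ∈ B.V, (∀ z ∈ G.V, e z ≠ w) → B.adj (e u) w)
    (hout : ∃ w ∈ B.V, ∀ z ∈ G.V, e z ≠ w) :
    ∃ M2, B.IsScope (e b) M2 ∧ (∃ l ∈ M2, B.IsLiteral l) ∧
      (M2 ≠ B.V ∨ Isol B (e b) ∨ Domin B (e b)) := by
  have hsubM : M ⊆ G.V := hsc.1.1.1.1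
  have hbM := hsc.2.1
  have hbV := hsubM hbM
  have hcardM := hsc.1.2
  have hGcard : 2 ≤ G.V.card := le_trans hcardM (Finset.card_le_card hsubM)
  have himgne : ∀ N : Finset ℕ, N ⊆ G.V → N.image e ≠ B.V := by
    intro N hN heq
    obtain ⟨w, hwB, hwout⟩ := hout
    rw [← heq] at hwB
    obtain ⟨z, hz, hez⟩ := Finset.mem_image.1 hwB
    exact hwout z (hN hz) hez
  by_cases hMV : M = G.V
  · have hflag' : Isol G b ∨ Domin G b := by
      rcases hflag with h | h | h
      · exact absurd hMV h
      · exact Or.inl h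
      · exact Or.inr h
    rcases hflag' with hiso | hdom
    · -- isolated binder over a join: scope becomes image of all of G
      have hscV : G.IsScope b G.V := hMV ▸ hsc
      have hstr : B.IsStrongModule (G.V.image e) := by
        apply strong_image he hwfG (V_isStrongModule hwfG)
        intro M'' hm hw hpne hsub
        have hcl := hmixed M'' hm hw
        have hbp : b ∈ preim G e M'' := by
          by_contra hbp
          obtain ⟨u, hu⟩ := hpne
          have huV := (mem_preim.1 hu).1
          exact hiso u (hwfG.1 _ _ (hcl u hu b hbV hbp))
        apply Finset.Subset.antisymm hsub
        intro v hvV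
        by_contra hvp
        exact hiso v (hcl b hbp v hvV hvp)
      have hsing : ∀ M'', B.IsStrongModule M'' → 2 ≤ M''.card → e b ∈ M'' →
          preim G e M'' = {b} → False := by
        intro M'' hstr'' hcard'' hbM'' hpre
        have hwout : ∃ w ∈ M'', ∀ z ∈ G.V, e z ≠ w := by
          obtain ⟨w, hwM, hwne⟩ := Finset.exists_mem_ne (show 1 < M''.card by omega) (e b)
          refine ⟨w, hwM, fun z hz heq => ?_⟩
          have hzp : z ∈ preim G e M'' := mem_preim.2 ⟨hz, heq ▸ hwM⟩
          rw [hpre, Finset.mem_singleton] at hzp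
          exact hwne (by rw [← heq, hzp])
        have hcl := hmixed M'' hstr''.1 hwout
        rw [hpre] at hcl
        have hdom := domin_of_coclosed_singleton hcl
        obtain ⟨u, huV, hub⟩ := Finset.exists_mem_ne (by omega : 1 < G.V.card) b
        exact hiso u (hdom u huV hub)
      obtain ⟨l, hlV, hlit⟩ := hlitG
      exact ⟨G.V.image e, scope_image he hwfG hbV hscV hstr hsing,
        ⟨e l, Finset.mem_image.2 ⟨l, hlV, rfl⟩, lit_image he hlV hlit⟩,
        Or.inl (himgne _ (Finset.Subset.refl _))⟩
    · -- dominating: scope becomes all of B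
      have hdomB : Domin B (e b) := by
        intro u huB hne
        by_cases hz : ∃ z ∈ G.V, e z = u
        · obtain ⟨z, hzV, rfl⟩ := hz
          have hzb : z ≠ b := fun h => hne (by rw [h])
          exact (he.adj_iff b z).2 (hdom z hzV hzb)
        · push_neg at hz
          exact hallcross b hbV u huB hz
      have hcardB : 2 ≤ B.V.card := by
        have himg : G.V.image e ⊆ B.V := by
          intro x hx
          obtain ⟨z, hz, rfl⟩ := Finset.mem_image.1 hx
          exact he.mapsV z hz
        have h1 := Finset.card_le_card himg
        rw [Finset.card_image_of_injOn (fun u _ v _ h => he.inj u v h)] at h1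
        omega
      obtain ⟨l, hlV, hlit⟩ := hlitG
      exact ⟨B.V, scope_V_of_domin hwfB (he.mapsV b hbV) hdomB hcardB,
        ⟨e l, he.mapsV l hlV, lit_image he hlV hlit⟩, Or.inr (Or.inr hdomB)⟩
  · -- stable case
    have hstr : B.IsStrongModule (M.image e) := by
      apply strong_image he hwfG hsc.1.1
      intro M'' hm hw hpne hsub
      exact strong_eq_of_coclosed hwfG hsc.1.1 hMV hsub hpne (hmixed M'' hm hw)
    have hsing : ∀ M'', B.IsStrongModule M'' → 2 ≤ M''.card → e b ∈ M'' →
        preim G e M'' = {b} → False := by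
      intro M'' hstr'' hcard'' hbM'' hpre
      have hwout : ∃ w ∈ M'', ∀ z ∈ G.V, e z ≠ w := by
        obtain ⟨w, hwM, hwne⟩ := Finset.exists_mem_ne (show 1 < M''.card by omega) (e b)
        refine ⟨w, hwM, fun z hz heq => ?_⟩
        have hzp : z ∈ preim G e M'' := mem_preim.2 ⟨hz, heq ▸ hwM⟩
        rw [hpre, Finset.mem_singleton] at hzp
        exact hwne (by rw [← heq, hzp])
      have hcl := hmixed M'' hstr''.1 hwout
      rw [hpre] at hcl
      have := strong_eq_of_coclosed hwfG hsc.1.1 hMV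
        (Finset.singleton_subset_iff.2 hbM) (Finset.singleton_nonempty b) hcl
      rw [← this] at hcardM
      simp at hcardM
    obtain ⟨l, hlM, hlit⟩ := hlitM
    exact ⟨M.image e, scope_image he hwfG hbV hsc hstr hsing,
      ⟨e l, Finset.mem_image.2 ⟨l, hlM, rfl⟩, lit_image he (hsubM hlM) hlit⟩,
      Or.inl (himgne _ hsubM)⟩

end FoAux5
namespace FoAux6
open LGraph FoAux FoAux2 FoAux3 FoAux4 FoAux5

variable {G H : LGraph} {M : Finset ℕ} {b : ℕ}

lemma lift_du_even (hwfG : G.WF) (hwfH : H.WF) (hHne : H.V.Nonempty)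
    (hsc : G.IsScope b M) (hflag : M ≠ G.V ∨ Isol G b ∨ Domin G b)
    (hlitG : ∃ l ∈ G.V, G.IsLiteral l) (hlitM : ∃ l ∈ M, G.IsLiteral l) :
    ∃ M2, (G.disjUnion H).IsScope (2 * b) M2 ∧
      (∃ l ∈ M2, (G.disjUnion H).IsLiteral l) ∧
      (M2 ≠ (G.disjUnion H).V ∨ Isol (G.disjUnion H) (2 * b) ∨
        Domin (G.disjUnion H) (2 * b)) := by
  obtain ⟨h0, hh⟩ := hHne
  have hnc : ∀ u ∈ G.V, ∀ w, (∀ z ∈ G.V, 2 * z ≠ w) → ¬ (G.disjUnion H).adj (2 * u) w := by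
    intro u hu w hw hadj
    have hp := du_adj_parity hadj
    have hwe : w = 2 * (w / 2) := by omega
    rw [hwe] at hadj
    exact hw (w / 2) (hwfG.2.2 _ _ (du_adj_ee.1 hadj)).2 (by omega)
  have hout : ∃ w ∈ (G.disjUnion H).V, ∀ z ∈ G.V, 2 * z ≠ w :=
    ⟨2 * h0 + 1, odd_mem_opV hh, fun z _ => by omega⟩
  exact lift_closed (e := fun v => 2 * v) (isEmb_du_even hwfG) hwfG (wf_disjUnion hwfG hwfH)
    hsc hflag hlitG hlitM (fun M'' hm hw => mixed_closed_du_even hwfG hm hw) hnc hout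

lemma lift_du_odd (hwfG : G.WF) (hwfH : H.WF) (hGne : G.V.Nonempty)
    (hsc : H.IsScope b M) (hflag : M ≠ H.V ∨ Isol H b ∨ Domin H b)
    (hlitG : ∃ l ∈ H.V, H.IsLiteral l) (hlitM : ∃ l ∈ M, H.IsLiteral l) :
    ∃ M2, (G.disjUnion H).IsScope (2 * b + 1) M2 ∧
      (∃ l ∈ M2, (G.disjUnion H).IsLiteral l) ∧
      (M2 ≠ (G.disjUnion H).V ∨ Isol (G.disjUnion H) (2 * b + 1) ∨
        Domin (G.disjUnion H) (2 * b + 1)) := by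
  obtain ⟨g0, hg⟩ := hGne
  have hnc : ∀ u ∈ H.V, ∀ w, (∀ z ∈ H.V, 2 * z + 1 ≠ w) →
      ¬ (G.disjUnion H).adj (2 * u + 1) w := by
    intro u hu w hw hadj
    have hp := du_adj_parity hadj
    have hwe : w = 2 * (w / 2) + 1 := by omega
    rw [hwe] at hadj
    exact hw (w / 2) (hwfH.2.2 _ _ (du_adj_oo.1 hadj)).2 (by omega)
  have hout : ∃ w ∈ (G.disjUnion H).V, ∀ z ∈ H.V, 2 * z + 1 ≠ w :=
    ⟨2 * g0, even_mem_opV hg, fun z _ => by omega⟩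
  exact lift_closed (e := fun v => 2 * v + 1) (isEmb_du_odd hwfH) hwfH (wf_disjUnion hwfG hwfH)
    hsc hflag hlitG hlitM (fun M'' hm hw => mixed_closed_du_odd hwfH hm hw) hnc hout

lemma lift_join_even (hwfG : G.WF) (hwfH : H.WF) (hHne : H.V.Nonempty)
    (hsc : G.IsScope b M) (hflag : M ≠ G.V ∨ Isol G b ∨ Domin G b)
    (hlitG : ∃ l ∈ G.V, G.IsLiteral l) (hlitM : ∃ l ∈ M, G.IsLiteral l) :
    ∃ M2, (G.join H).IsScope (2 * b) M2 ∧
      (∃ l ∈ M2, (G.join H).IsLiteral l) ∧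
      (M2 ≠ (G.join H).V ∨ Isol (G.join H) (2 * b) ∨ Domin (G.join H) (2 * b)) := by
  obtain ⟨h0, hh⟩ := hHne
  have hac : ∀ u ∈ G.V, ∀ w ∈ (G.join H).V, (∀ z ∈ G.V, 2 * z ≠ w) →
      (G.join H).adj (2 * u) w := by
    intro u hu w hwB hw
    rcases mem_joinV_iff.1 hwB with ⟨hp, hV2⟩ | ⟨hp, hV2⟩
    · exact absurd (by omega : 2 * (w / 2) = w) (hw (w / 2) hV2)
    · have hwe : w = 2 * (w / 2) + 1 := by omega
      rw [hwe, join_adj_eo]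
      exact ⟨hu, hV2⟩
  have hout : ∃ w ∈ (G.join H).V, ∀ z ∈ G.V, 2 * z ≠ w :=
    ⟨2 * h0 + 1, odd_mem_joinV hh, fun z _ => by omega⟩
  exact lift_coclosed (e := fun v => 2 * v) (isEmb_join_even hwfG) hwfG (wf_join hwfG hwfH)
    hsc hflag hlitG hlitM (fun M'' hm hw => mixed_coclosed_join_even hwfG hm hw) hac hout

lemma lift_join_odd (hwfG : G.WF) (hwfH : H.WF) (hGne : G.V.Nonempty)
    (hsc : H.IsScope b M) (hflag : M ≠ H.V ∨ Isol H b ∨ Domin H b)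
    (hlitG : ∃ l ∈ H.V, H.IsLiteral l) (hlitM : ∃ l ∈ M, H.IsLiteral l) :
    ∃ M2, (G.join H).IsScope (2 * b + 1) M2 ∧
      (∃ l ∈ M2, (G.join H).IsLiteral l) ∧
      (M2 ≠ (G.join H).V ∨ Isol (G.join H) (2 * b + 1) ∨ Domin (G.join H) (2 * b + 1)) := by
  obtain ⟨g0, hg⟩ := hGne
  have hac : ∀ u ∈ H.V, ∀ w ∈ (G.join H).V, (∀ z ∈ H.V, 2 * z + 1 ≠ w) →
      (G.join H).adj (2 * u + 1) w := by
    intro u hu w hwB hw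
    rcases mem_joinV_iff.1 hwB with ⟨hp, hV2⟩ | ⟨hp, hV2⟩
    · have hwe : w = 2 * (w / 2) := by omega
      rw [hwe, join_adj_oe]
      exact ⟨hu, hV2⟩
    · exact absurd (by omega : 2 * (w / 2) + 1 = w) (hw (w / 2) hV2)
  have hout : ∃ w ∈ (G.join H).V, ∀ z ∈ H.V, 2 * z + 1 ≠ w :=
    ⟨2 * g0, even_mem_joinV hg, fun z _ => by omega⟩
  exact lift_coclosed (e := fun v => 2 * v + 1) (isEmb_join_odd hwfH) hwfH (wf_join hwfG hwfH)
    hsc hflag hlitG hlitM (fun M'' hm hw => mixed_coclosed_join_odd hwfH hm hw) hac hout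

end FoAux6
namespace FoAux7
open LGraph FoAux FoAux2 FoAux3 FoAux4 FoAux5 FoAux6

variable {G H : LGraph}

lemma graphOf_and (A B : Form) : (Form.and A B).graphOf = A.graphOf.join B.graphOf := rfl
lemma graphOf_or (A B : Form) : (Form.or A B).graphOf = A.graphOf.disjUnion B.graphOf := rfl
lemma graphOf_all (x : ℕ) (A : Form) :
    (Form.all x A).graphOf = (LGraph.single (.var x)).disjUnion A.graphOf := rfl
lemma graphOf_ex (x : ℕ) (A : Form) :
    (Form.ex x A).graphOf = (LGraph.single (.var x)).join A.graphOf := rfl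

lemma single_V {l : Label} : (LGraph.single l).V = {0} := rfl
lemma single_lab {l : Label} {v : ℕ} : (LGraph.single l).lab v = l := rfl

lemma cograph_single {l : Label} : (LGraph.single l).IsCograph := by
  intro v1 v2 v3 v4 h1 h2 h3 h4 n12 _ _ _ _ _ _
  rw [single_V, Finset.mem_singleton] at h1 h2
  exact n12 (h1.trans h2.symm)

lemma cograph_du (hG : G.IsCograph) (hH : H.IsCograph) : (G.disjUnion H).IsCograph := by
  intro v1 v2 v3 v4 h1 h2 h3 h4 n12 n13 n14 n23 n24 n34 hcon
  obtain ⟨a12, a23, a34, na13, na14, na24⟩ := hcon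
  have p12 := du_adj_parity a12
  have p23 := du_adj_parity a23
  have p34 := du_adj_parity a34
  have e1 : v1 % 2 = 0 ∨ v1 % 2 = 1 := by omega
  rcases e1 with q1 | q1
  · have q2 : v2 % 2 = 0 := by omega
    have q3 : v3 % 2 = 0 := by omega
    have q4 : v4 % 2 = 0 := by omega
    have m1 : v1 / 2 ∈ G.V := by rcases mem_opV_iff.1 h1 with ⟨_, m⟩ | ⟨q, _⟩; exact m; omega
    have m2 : v2 / 2 ∈ G.V := by rcases mem_opV_iff.1 h2 with ⟨_, m⟩ | ⟨q, _⟩; exact m; omega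
    have m3 : v3 / 2 ∈ G.V := by rcases mem_opV_iff.1 h3 with ⟨_, m⟩ | ⟨q, _⟩; exact m; omega
    have m4 : v4 / 2 ∈ G.V := by rcases mem_opV_iff.1 h4 with ⟨_, m⟩ | ⟨q, _⟩; exact m; omega
    have r1 : v1 = 2 * (v1 / 2) := by omega
    have r2 : v2 = 2 * (v2 / 2) := by omega
    have r3 : v3 = 2 * (v3 / 2) := by omega
    have r4 : v4 = 2 * (v4 / 2) := by omega
    refine hG (v1 / 2) (v2 / 2) (v3 / 2) (v4 / 2) m1 m2 m3 m4 (by omega) (by omega)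
      (by omega) (by omega) (by omega) (by omega) ⟨?_, ?_, ?_, ?_, ?_, ?_⟩
    · exact du_adj_ee.1 (by rw [← r1, ← r2]; exact a12)
    · exact du_adj_ee.1 (by rw [← r2, ← r3]; exact a23)
    · exact du_adj_ee.1 (by rw [← r3, ← r4]; exact a34)
    · exact fun h => na13 (by rw [r1, r3]; exact du_adj_ee.2 h)
    · exact fun h => na14 (by rw [r1, r4]; exact du_adj_ee.2 h)
    · exact fun h => na24 (by rw [r2, r4]; exact du_adj_ee.2 h)
  · have q2 : v2 % 2 = 1 := by omega
    have q3 : v3 % 2 = 1 := by omega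
    have q4 : v4 % 2 = 1 := by omega
    have m1 : v1 / 2 ∈ H.V := by rcases mem_opV_iff.1 h1 with ⟨q, _⟩ | ⟨_, m⟩; omega; exact m
    have m2 : v2 / 2 ∈ H.V := by rcases mem_opV_iff.1 h2 with ⟨q, _⟩ | ⟨_, m⟩; omega; exact m
    have m3 : v3 / 2 ∈ H.V := by rcases mem_opV_iff.1 h3 with ⟨q, _⟩ | ⟨_, m⟩; omega; exact m
    have m4 : v4 / 2 ∈ H.V := by rcases mem_opV_iff.1 h4 with ⟨q, _⟩ | ⟨_, m⟩; omega; exact m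
    have r1 : v1 = 2 * (v1 / 2) + 1 := by omega
    have r2 : v2 = 2 * (v2 / 2) + 1 := by omega
    have r3 : v3 = 2 * (v3 / 2) + 1 := by omega
    have r4 : v4 = 2 * (v4 / 2) + 1 := by omega
    refine hH (v1 / 2) (v2 / 2) (v3 / 2) (v4 / 2) m1 m2 m3 m4 (by omega) (by omega)
      (by omega) (by omega) (by omega) (by omega) ⟨?_, ?_, ?_, ?_, ?_, ?_⟩
    · exact du_adj_oo.1 (by rw [← r1, ← r2]; exact a12)
    · exact du_adj_oo.1 (by rw [← r2, ← r3]; exact a23)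
    · exact du_adj_oo.1 (by rw [← r3, ← r4]; exact a34)
    · exact fun h => na13 (by rw [r1, r3]; exact du_adj_oo.2 h)
    · exact fun h => na14 (by rw [r1, r4]; exact du_adj_oo.2 h)
    · exact fun h => na24 (by rw [r2, r4]; exact du_adj_oo.2 h)

lemma cograph_join (hG : G.IsCograph) (hH : H.IsCograph) : (G.join H).IsCograph := by
  intro v1 v2 v3 v4 h1 h2 h3 h4 n12 n13 n14 n23 n24 n34 hcon
  obtain ⟨a12, a23, a34, na13, na14, na24⟩ := hcon
  have key : ∀ u v, u ∈ (G.join H).V → v ∈ (G.join H).V → ¬ (G.join H).adj u v →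
      u % 2 = v % 2 := by
    intro u v hu hv hna
    by_contra hne
    rcases mem_joinV_iff.1 hu with ⟨pu, mu⟩ | ⟨pu, mu⟩ <;>
      rcases mem_joinV_iff.1 hv with ⟨pv, mv⟩ | ⟨pv, mv⟩
    · omega
    · exact hna (by
        rw [show u = 2 * (u / 2) by omega, show v = 2 * (v / 2) + 1 by omega]
        exact join_adj_eo.2 ⟨mu, mv⟩)
    · exact hna (by
        rw [show u = 2 * (u / 2) + 1 by omega, show v = 2 * (v / 2) by omega]
        exact join_adj_oe.2 ⟨mu, mv⟩)
    · omega
  have p13 := key v1 v3 h1 h3 na13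
  have p14 := key v1 v4 h1 h4 na14
  have p24 := key v2 v4 h2 h4 na24
  have e1 : v1 % 2 = 0 ∨ v1 % 2 = 1 := by omega
  rcases e1 with q1 | q1
  · have q2 : v2 % 2 = 0 := by omega
    have q3 : v3 % 2 = 0 := by omega
    have q4 : v4 % 2 = 0 := by omega
    have m1 : v1 / 2 ∈ G.V := by rcases mem_joinV_iff.1 h1 with ⟨_, m⟩ | ⟨q, _⟩; exact m; omega
    have m2 : v2 / 2 ∈ G.V := by rcases mem_joinV_iff.1 h2 with ⟨_, m⟩ | ⟨q, _⟩; exact m; omega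
    have m3 : v3 / 2 ∈ G.V := by rcases mem_joinV_iff.1 h3 with ⟨_, m⟩ | ⟨q, _⟩; exact m; omega
    have m4 : v4 / 2 ∈ G.V := by rcases mem_joinV_iff.1 h4 with ⟨_, m⟩ | ⟨q, _⟩; exact m; omega
    have r1 : v1 = 2 * (v1 / 2) := by omega
    have r2 : v2 = 2 * (v2 / 2) := by omega
    have r3 : v3 = 2 * (v3 / 2) := by omega
    have r4 : v4 = 2 * (v4 / 2) := by omega
    refine hG (v1 / 2) (v2 / 2) (v3 / 2) (v4 / 2) m1 m2 m3 m4 (by omega) (by omega)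
      (by omega) (by omega) (by omega) (by omega) ⟨?_, ?_, ?_, ?_, ?_, ?_⟩
    · exact join_adj_ee.1 (by rw [← r1, ← r2]; exact a12)
    · exact join_adj_ee.1 (by rw [← r2, ← r3]; exact a23)
    · exact join_adj_ee.1 (by rw [← r3, ← r4]; exact a34)
    · exact fun h => na13 (by rw [r1, r3]; exact join_adj_ee.2 h)
    · exact fun h => na14 (by rw [r1, r4]; exact join_adj_ee.2 h)
    · exact fun h => na24 (by rw [r2, r4]; exact join_adj_ee.2 h)
  · have q2 : v2 % 2 = 1 := by omega
    have q3 : v3 % 2 = 1 := by omega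
    have q4 : v4 % 2 = 1 := by omega
    have m1 : v1 / 2 ∈ H.V := by rcases mem_joinV_iff.1 h1 with ⟨q, _⟩ | ⟨_, m⟩; omega; exact m
    have m2 : v2 / 2 ∈ H.V := by rcases mem_joinV_iff.1 h2 with ⟨q, _⟩ | ⟨_, m⟩; omega; exact m
    have m3 : v3 / 2 ∈ H.V := by rcases mem_joinV_iff.1 h3 with ⟨q, _⟩ | ⟨_, m⟩; omega; exact m
    have m4 : v4 / 2 ∈ H.V := by rcases mem_joinV_iff.1 h4 with ⟨q, _⟩ | ⟨_, m⟩; omega; exact m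
    have r1 : v1 = 2 * (v1 / 2) + 1 := by omega
    have r2 : v2 = 2 * (v2 / 2) + 1 := by omega
    have r3 : v3 = 2 * (v3 / 2) + 1 := by omega
    have r4 : v4 = 2 * (v4 / 2) + 1 := by omega
    refine hH (v1 / 2) (v2 / 2) (v3 / 2) (v4 / 2) m1 m2 m3 m4 (by omega) (by omega)
      (by omega) (by omega) (by omega) (by omega) ⟨?_, ?_, ?_, ?_, ?_, ?_⟩
    · exact join_adj_oo.1 (by rw [← r1, ← r2]; exact a12)
    · exact join_adj_oo.1 (by rw [← r2, ← r3]; exact a23)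
    · exact join_adj_oo.1 (by rw [← r3, ← r4]; exact a34)
    · exact fun h => na13 (by rw [r1, r3]; exact join_adj_oo.2 h)
    · exact fun h => na14 (by rw [r1, r4]; exact join_adj_oo.2 h)
    · exact fun h => na24 (by rw [r2, r4]; exact join_adj_oo.2 h)

lemma graphOf_wf : ∀ A : Form, A.graphOf.WF := by
  intro A
  induction A with
  | pos p ts => exact wf_single
  | neg p ts => exact wf_single
  | top => exact wf_single
  | bot => exact wf_single
  | and A B ihA ihB => exact wf_join ihA ihB
  | or A B ihA ihB => exact wf_disjUnion ihA ihB
  | all x A ihA => exact wf_disjUnion wf_single ihA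
  | ex x A ihA => exact wf_join wf_single ihA

lemma graphOf_cograph : ∀ A : Form, A.graphOf.IsCograph := by
  intro A
  induction A with
  | pos p ts => exact cograph_single
  | neg p ts => exact cograph_single
  | top => exact cograph_single
  | bot => exact cograph_single
  | and A B ihA ihB => exact cograph_join ihA ihB
  | or A B ihA ihB => exact cograph_du ihA ihB
  | all x A ihA => exact cograph_du cograph_single ihA
  | ex x A ihA => exact cograph_join cograph_single ihA

lemma graphOf_lit : ∀ A : Form, ∃ l ∈ A.graphOf.V, A.graphOf.IsLiteral l := by
  intro A
  induction A with
  | and A B ihA ihB =>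
    obtain ⟨l, hl, hlit⟩ := ihA
    exact ⟨2 * l, even_mem_joinV hl, lit_image (isEmb_join_even (graphOf_wf A)) hl hlit⟩
  | or A B ihA ihB =>
    obtain ⟨l, hl, hlit⟩ := ihA
    exact ⟨2 * l, even_mem_opV hl, lit_image (isEmb_du_even (graphOf_wf A)) hl hlit⟩
  | all x A ihA =>
    obtain ⟨l, hl, hlit⟩ := ihA
    exact ⟨2 * l + 1, odd_mem_opV hl, lit_image (isEmb_du_odd (graphOf_wf A)) hl hlit⟩
  | ex x A ihA =>
    obtain ⟨l, hl, hlit⟩ := ihA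
    exact ⟨2 * l + 1, odd_mem_joinV hl, lit_image (isEmb_join_odd (graphOf_wf A)) hl hlit⟩
  | pos p ts =>
    exact ⟨0, Finset.mem_singleton_self 0, Finset.mem_singleton_self 0, _, rfl⟩
  | neg p ts =>
    exact ⟨0, Finset.mem_singleton_self 0, Finset.mem_singleton_self 0, _, rfl⟩
  | top =>
    exact ⟨0, Finset.mem_singleton_self 0, Finset.mem_singleton_self 0, _, rfl⟩
  | bot =>
    exact ⟨0, Finset.mem_singleton_self 0, Finset.mem_singleton_self 0, _, rfl⟩

lemma graphOf_ne (A : Form) : A.graphOf.V.Nonempty := by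
  obtain ⟨l, hl, _⟩ := graphOf_lit A
  exact ⟨l, hl⟩

lemma graphOf_atoms : ∀ A : Form, ∀ v ∈ A.graphOf.V, ∀ a, A.graphOf.lab v = .atm a →
    a.IsAtom := by
  intro A
  induction A with
  | pos p ts => intro v _ a ha; cases ha; trivial
  | neg p ts => intro v _ a ha; cases ha; trivial
  | top => intro v _ a ha; cases ha; trivial
  | bot => intro v _ a ha; cases ha; trivial
  | and A B ihA ihB =>
    intro v hv a ha
    rw [graphOf_and] at ha
    rcases mem_joinV_iff.1 hv with ⟨p, m⟩ | ⟨p, m⟩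
    · rw [lab_join_even p] at ha
      exact ihA _ m a ha
    · rw [lab_join_odd p] at ha
      exact ihB _ m a ha
  | or A B ihA ihB =>
    intro v hv a ha
    rw [graphOf_or] at ha
    rcases mem_opV_iff.1 hv with ⟨p, m⟩ | ⟨p, m⟩
    · rw [lab_op_even p] at ha
      exact ihA _ m a ha
    · rw [lab_op_odd p] at ha
      exact ihB _ m a ha
  | all x A ihA =>
    intro v hv a ha
    rw [graphOf_all] at ha
    rcases mem_opV_iff.1 hv with ⟨p, m⟩ | ⟨p, m⟩
    · rw [lab_op_even p] at ha
      cases ha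
    · rw [lab_op_odd p] at ha
      exact ihA _ m a ha
  | ex x A ihA =>
    intro v hv a ha
    rw [graphOf_ex] at ha
    rcases mem_joinV_iff.1 hv with ⟨p, m⟩ | ⟨p, m⟩
    · rw [lab_join_even p] at ha
      cases ha
    · rw [lab_join_odd p] at ha
      exact ihA _ m a ha

end FoAux7
namespace FoAux8
open LGraph FoAux FoAux2 FoAux3 FoAux4 FoAux5 FoAux6 FoAux7

lemma graphOf_pos (p : ℕ) (ts : List Term) :
    (Form.pos p ts).graphOf = LGraph.single (.atm (Form.pos p ts)) := rfl
lemma graphOf_neg (p : ℕ) (ts : List Term) :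
    (Form.neg p ts).graphOf = LGraph.single (.atm (Form.neg p ts)) := rfl
lemma graphOf_top : Form.top.graphOf = LGraph.single (.atm Form.top) := rfl
lemma graphOf_bot : Form.bot.graphOf = LGraph.single (.atm Form.bot) := rfl

lemma lab_var_mem_bv : ∀ (A : Form) (v x : ℕ), v ∈ A.graphOf.V →
    A.graphOf.lab v = .var x → x ∈ A.bvList := by
  intro A
  induction A with
  | pos p ts => intro v x _ hl; rw [graphOf_pos, single_lab] at hl; cases hl
  | neg p ts => intro v x _ hl; rw [graphOf_neg, single_lab] at hl; cases hl
  | top => intro v x _ hl; rw [graphOf_top, single_lab] at hl; cases hl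
  | bot => intro v x _ hl; rw [graphOf_bot, single_lab] at hl; cases hl
  | and A B ihA ihB =>
    intro v x hv hl
    rw [graphOf_and] at hl
    rcases mem_joinV_iff.1 hv with ⟨p, m⟩ | ⟨p, m⟩
    · rw [lab_join_even p] at hl
      exact List.mem_append_left _ (ihA _ x m hl)
    · rw [lab_join_odd p] at hl
      exact List.mem_append_right _ (ihB _ x m hl)
  | or A B ihA ihB =>
    intro v x hv hl
    rw [graphOf_or] at hl
    rcases mem_opV_iff.1 hv with ⟨p, m⟩ | ⟨p, m⟩
    · rw [lab_op_even p] at hl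
      exact List.mem_append_left _ (ihA _ x m hl)
    · rw [lab_op_odd p] at hl
      exact List.mem_append_right _ (ihB _ x m hl)
  | all y A ihA =>
    intro v x hv hl
    rw [graphOf_all] at hl
    rcases mem_opV_iff.1 hv with ⟨p, m⟩ | ⟨p, m⟩
    · rw [lab_op_even p, single_lab] at hl
      injection hl with h
      rw [← h]
      exact List.mem_cons_self
    · rw [lab_op_odd p] at hl
      exact List.mem_cons_of_mem y (ihA _ x m hl)
  | ex y A ihA =>
    intro v x hv hl
    rw [graphOf_ex] at hl
    rcases mem_joinV_iff.1 hv with ⟨p, m⟩ | ⟨p, m⟩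
    · rw [lab_join_even p, single_lab] at hl
      injection hl with h
      rw [← h]
      exact List.mem_cons_self
    · rw [lab_join_odd p] at hl
      exact List.mem_cons_of_mem y (ihA _ x m hl)

lemma lab_var_unique : ∀ (A : Form), A.bvList.Nodup → ∀ (x v w : ℕ),
    v ∈ A.graphOf.V → w ∈ A.graphOf.V →
    A.graphOf.lab v = .var x → A.graphOf.lab w = .var x → v = w := by
  intro A
  induction A with
  | pos p ts => intro _ x v w _ _ hl _; rw [graphOf_pos, single_lab] at hl; cases hl
  | neg p ts => intro _ x v w _ _ hl _; rw [graphOf_neg, single_lab] at hl; cases hl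
  | top => intro _ x v w _ _ hl _; rw [graphOf_top, single_lab] at hl; cases hl
  | bot => intro _ x v w _ _ hl _; rw [graphOf_bot, single_lab] at hl; cases hl
  | and A B ihA ihB =>
    intro hnd x v w hv hw hlv hlw
    have hnd' : (A.bvList ++ B.bvList).Nodup := hnd
    rw [List.nodup_append] at hnd'
    rw [graphOf_and] at hlv hlw
    rcases mem_joinV_iff.1 hv with ⟨pv, mv⟩ | ⟨pv, mv⟩ <;>
      rcases mem_joinV_iff.1 hw with ⟨pw, mw⟩ | ⟨pw, mw⟩
    · rw [lab_join_even pv] at hlv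
      rw [lab_join_even pw] at hlw
      have := ihA hnd'.1 x _ _ mv mw hlv hlw
      omega
    · rw [lab_join_even pv] at hlv
      rw [lab_join_odd pw] at hlw
      exact absurd (lab_var_mem_bv B _ x mw hlw) (fun hB => hnd'.2.2 x (lab_var_mem_bv A _ x mv hlv) x hB rfl)
    · rw [lab_join_odd pv] at hlv
      rw [lab_join_even pw] at hlw
      exact absurd (lab_var_mem_bv B _ x mv hlv) (fun hB => hnd'.2.2 x (lab_var_mem_bv A _ x mw hlw) x hB rfl)
    · rw [lab_join_odd pv] at hlv
      rw [lab_join_odd pw] at hlw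
      have := ihB hnd'.2.1 x _ _ mv mw hlv hlw
      omega
  | or A B ihA ihB =>
    intro hnd x v w hv hw hlv hlw
    have hnd' : (A.bvList ++ B.bvList).Nodup := hnd
    rw [List.nodup_append] at hnd'
    rw [graphOf_or] at hlv hlw
    rcases mem_opV_iff.1 hv with ⟨pv, mv⟩ | ⟨pv, mv⟩ <;>
      rcases mem_opV_iff.1 hw with ⟨pw, mw⟩ | ⟨pw, mw⟩
    · rw [lab_op_even pv] at hlv
      rw [lab_op_even pw] at hlw
      have := ihA hnd'.1 x _ _ mv mw hlv hlw
      omega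
    · rw [lab_op_even pv] at hlv
      rw [lab_op_odd pw] at hlw
      exact absurd (lab_var_mem_bv B _ x mw hlw) (fun hB => hnd'.2.2 x (lab_var_mem_bv A _ x mv hlv) x hB rfl)
    · rw [lab_op_odd pv] at hlv
      rw [lab_op_even pw] at hlw
      exact absurd (lab_var_mem_bv B _ x mv hlv) (fun hB => hnd'.2.2 x (lab_var_mem_bv A _ x mw hlw) x hB rfl)
    · rw [lab_op_odd pv] at hlv
      rw [lab_op_odd pw] at hlw
      have := ihB hnd'.2.1 x _ _ mv mw hlv hlw
      omega
  | all y A ihA =>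
    intro hnd x v w hv hw hlv hlw
    have hnd' : (y :: A.bvList).Nodup := hnd
    rw [List.nodup_cons] at hnd'
    rw [graphOf_all] at hlv hlw
    rcases mem_opV_iff.1 hv with ⟨pv, mv⟩ | ⟨pv, mv⟩ <;>
      rcases mem_opV_iff.1 hw with ⟨pw, mw⟩ | ⟨pw, mw⟩
    · rw [single_V, Finset.mem_singleton] at mv mw
      omega
    · rw [lab_op_even pv, single_lab] at hlv
      injection hlv with h
      rw [lab_op_odd pw] at hlw
      rw [← h] at hlw
      exact absurd (lab_var_mem_bv A _ y mw hlw) hnd'.1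
    · rw [lab_op_even pw, single_lab] at hlw
      injection hlw with h
      rw [lab_op_odd pv] at hlv
      rw [← h] at hlv
      exact absurd (lab_var_mem_bv A _ y mv hlv) hnd'.1
    · rw [lab_op_odd pv] at hlv
      rw [lab_op_odd pw] at hlw
      have := ihA hnd'.2 x _ _ mv mw hlv hlw
      omega
  | ex y A ihA =>
    intro hnd x v w hv hw hlv hlw
    have hnd' : (y :: A.bvList).Nodup := hnd
    rw [List.nodup_cons] at hnd'
    rw [graphOf_ex] at hlv hlw
    rcases mem_joinV_iff.1 hv with ⟨pv, mv⟩ | ⟨pv, mv⟩ <;>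
      rcases mem_joinV_iff.1 hw with ⟨pw, mw⟩ | ⟨pw, mw⟩
    · rw [single_V, Finset.mem_singleton] at mv mw
      omega
    · rw [lab_join_even pv, single_lab] at hlv
      injection hlv with h
      rw [lab_join_odd pw] at hlw
      rw [← h] at hlw
      exact absurd (lab_var_mem_bv A _ y mw hlw) hnd'.1
    · rw [lab_join_even pw, single_lab] at hlw
      injection hlw with h
      rw [lab_join_odd pv] at hlv
      rw [← h] at hlv
      exact absurd (lab_var_mem_bv A _ y mv hlv) hnd'.1
    · rw [lab_join_odd pv] at hlv
      rw [lab_join_odd pw] at hlw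
      have := ihA hnd'.2 x _ _ mv mw hlv hlw
      omega

def Good (A : Form) : Prop :=
  ∀ b, A.graphOf.IsBinder b → ∃ M, A.graphOf.IsScope b M ∧
    (∃ l ∈ M, A.graphOf.IsLiteral l) ∧
    (M ≠ A.graphOf.V ∨ Isol A.graphOf b ∨ Domin A.graphOf b)

lemma good_all : ∀ A : Form, Good A := by
  intro A
  induction A with
  | pos p ts =>
    rintro b ⟨_, x, hl⟩
    rw [graphOf_pos, single_lab] at hl
    cases hl
  | neg p ts =>
    rintro b ⟨_, x, hl⟩
    rw [graphOf_neg, single_lab] at hl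
    cases hl
  | top =>
    rintro b ⟨_, x, hl⟩
    rw [graphOf_top, single_lab] at hl
    cases hl
  | bot =>
    rintro b ⟨_, x, hl⟩
    rw [graphOf_bot, single_lab] at hl
    cases hl
  | and A B ihA ihB =>
    rintro b ⟨hbV, x, hlab⟩
    rw [graphOf_and] at hlab ⊢
    rcases mem_joinV_iff.1 hbV with ⟨p, m⟩ | ⟨p, m⟩
    · rw [lab_join_even p] at hlab
      obtain ⟨M, hsc, hlit, hflag⟩ := ihA (b / 2) ⟨m, x, hlab⟩
      rw [show b = 2 * (b / 2) by omega]
      exact lift_join_even (graphOf_wf A) (graphOf_wf B) (graphOf_ne B) hsc hflag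
        (graphOf_lit A) hlit
    · rw [lab_join_odd p] at hlab
      obtain ⟨M, hsc, hlit, hflag⟩ := ihB (b / 2) ⟨m, x, hlab⟩
      rw [show b = 2 * (b / 2) + 1 by omega]
      exact lift_join_odd (graphOf_wf A) (graphOf_wf B) (graphOf_ne A) hsc hflag
        (graphOf_lit B) hlit
  | or A B ihA ihB =>
    rintro b ⟨hbV, x, hlab⟩
    rw [graphOf_or] at hlab ⊢
    rcases mem_opV_iff.1 hbV with ⟨p, m⟩ | ⟨p, m⟩
    · rw [lab_op_even p] at hlab
      obtain ⟨M, hsc, hlit, hflag⟩ := ihA (b / 2) ⟨m, x, hlab⟩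
      rw [show b = 2 * (b / 2) by omega]
      exact lift_du_even (graphOf_wf A) (graphOf_wf B) (graphOf_ne B) hsc hflag
        (graphOf_lit A) hlit
    · rw [lab_op_odd p] at hlab
      obtain ⟨M, hsc, hlit, hflag⟩ := ihB (b / 2) ⟨m, x, hlab⟩
      rw [show b = 2 * (b / 2) + 1 by omega]
      exact lift_du_odd (graphOf_wf A) (graphOf_wf B) (graphOf_ne A) hsc hflag
        (graphOf_lit B) hlit
  | all y A ihA =>
    rintro b ⟨hbV, x, hlab⟩
    rw [graphOf_all] at hbV hlab ⊢
    rcases mem_opV_iff.1 hbV with ⟨p, m⟩ | ⟨p, m⟩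
    · rw [single_V, Finset.mem_singleton] at m
      have hb0 : b = 0 := by omega
      subst hb0
      have hiso : Isol ((LGraph.single (Label.var y)).disjUnion A.graphOf) 0 := by
        rintro u (⟨h1, h2, h3⟩ | ⟨h1, h2, h3⟩)
        · exact h3
        · omega
      obtain ⟨l, hlV, hlit⟩ := graphOf_lit A
      have hcard : 2 ≤ ((LGraph.single (Label.var y)).disjUnion A.graphOf).V.card := by
        have := Finset.one_lt_card.2 ⟨0, hbV, 2 * l + 1, odd_mem_opV hlV, by omega⟩
        omega
      exact ⟨_, scope_V_of_isol (wf_disjUnion wf_single (graphOf_wf A)) hbV hiso hcard,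
        ⟨2 * l + 1, odd_mem_opV hlV, lit_image (isEmb_du_odd (graphOf_wf A)) hlV hlit⟩,
        Or.inr (Or.inl hiso)⟩
    · rw [lab_op_odd p] at hlab
      obtain ⟨M, hsc, hlit, hflag⟩ := ihA (b / 2) ⟨m, x, hlab⟩
      rw [show b = 2 * (b / 2) + 1 by omega]
      exact lift_du_odd wf_single (graphOf_wf A) ⟨0, Finset.mem_singleton_self 0⟩ hsc hflag
        (graphOf_lit A) hlit
  | ex y A ihA =>
    rintro b ⟨hbV, x, hlab⟩
    rw [graphOf_ex] at hbV hlab ⊢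
    rcases mem_joinV_iff.1 hbV with ⟨p, m⟩ | ⟨p, m⟩
    · rw [single_V, Finset.mem_singleton] at m
      have hb0 : b = 0 := by omega
      subst hb0
      have hdom : Domin ((LGraph.single (Label.var y)).join A.graphOf) 0 := by
        intro u huB hne
        rcases mem_joinV_iff.1 huB with ⟨pu, mu⟩ | ⟨pu, mu⟩
        · rw [single_V, Finset.mem_singleton] at mu
          exact absurd (by omega : u = 0) hne
        · exact Or.inr (Or.inr (Or.inl ⟨by omega, pu, by simp [single_V], mu⟩))
      obtain ⟨l, hlV, hlit⟩ := graphOf_lit A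
      have hcard : 2 ≤ ((LGraph.single (Label.var y)).join A.graphOf).V.card := by
        have := Finset.one_lt_card.2 ⟨0, hbV, 2 * l + 1, odd_mem_joinV hlV, by omega⟩
        omega
      exact ⟨_, scope_V_of_domin (wf_join wf_single (graphOf_wf A)) hbV hdom hcard,
        ⟨2 * l + 1, odd_mem_joinV hlV, lit_image (isEmb_join_odd (graphOf_wf A)) hlV hlit⟩,
        Or.inr (Or.inr hdom)⟩
    · rw [lab_join_odd p] at hlab
      obtain ⟨M, hsc, hlit, hflag⟩ := ihA (b / 2) ⟨m, x, hlab⟩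
      rw [show b = 2 * (b / 2) + 1 by omega]
      exact lift_join_odd wf_single (graphOf_wf A) ⟨0, Finset.mem_singleton_self 0⟩ hsc hflag
        (graphOf_lit A) hlit

end FoAux8

/-- If `A` is a rectified formula then `⟦A⟧` is a fograph. -/
theorem graphOf_isFograph (A : Form) (h : A.Rectified) :
    A.graphOf.IsFograph := by
  refine ⟨⟨FoAux7.graphOf_wf A, FoAux7.graphOf_cograph A, FoAux7.graphOf_atoms A, ?_⟩, ?_⟩
  · obtain ⟨l, _, hlit⟩ := FoAux7.graphOf_lit A
    exact ⟨l, hlit⟩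
  · intro b hb
    obtain ⟨hbV, x, hlabx⟩ := hb
    obtain ⟨M, hsc, hlit, _⟩ := FoAux8.good_all A b ⟨hbV, x, hlabx⟩
    refine ⟨x, M, hlabx, hsc, ?_, hlit⟩
    intro v hv hvb hlabv
    exact hvb (FoAux8.lab_var_unique A h.1 x v b (hsc.1.1.1.1 hv) hbV hlabv hlabx)
end
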